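/- arXiv:2501.12055 — 5 statements merged into one kernel-verified Lean document; each statement's English description precedes it below -/
import Mathlib

section
/- Every polynomial h(x) of degree n with real coefficients can be uniquely written as h(x) = a(x) + x·b(x), where a(x) satisfies x^n·a(1/x) = a(x) (i.e., a is symmetric of degree at most n) and b(x) satisfies x^(n-1)·b(1/x) = b(x) (i.e., b is symmetric of degree at most n-1). Explicitly, a(x) = (h(x) - x^(n+1)·h(1/x))/(1-x) and b(x) = (x^n·h(1/x) - h(x))/(1-x). -/
/-!
Reflecting `h = a + X * b` in degree `n` gives `X ^ n * h (1 / X) = a + b`, hence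
`(1 - X) * b = X ^ n * h (1 / X) - h`; since `1 - X` is a non-zero-divisor, this yields the
formulas and uniqueness. For existence, `h - X ^ n * h (1 / X)` vanishes at `1`; its quotient `b`
by `X - 1` is palindromic of degree `n - 1` because `X - 1` is anti-palindromic of degree `1`,
and then `a := h - X * b` is palindromic of degree `n`.
-/

open Polynomial

namespace Polynomial

variable {R : Type*}

def IsPalindromic [Semiring R] (n : ℕ) (p : R[X]) : Prop :=
  p.natDegree ≤ n ∧ p.reflect n = p

section Semiring

variable [Semiring R]

theorem reflect_X_mul {n : ℕ} {b : R[X]} (hb : b.natDegree ≤ n) :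
    (X * b).reflect (n + 1) = b.reflect n := by
  rw [add_comm, reflect_mul _ _ natDegree_X_le hb, reflect_one_X, one_mul]

theorem reflect_eq_add_of_eq_add_X_mul {n : ℕ} {f a b : R[X]} (hf : f.natDegree ≤ n)
    (hfab : f = a + X * b) (ha : IsPalindromic n a) (hb : IsPalindromic (n - 1) b) :
    f.reflect n = a + b := by
  rcases n with _ | m
  · -- here `n - 1` truncates to `0`, and the coefficient of `X` in `f` forces `b = 0`
    have hb0 : b = 0 := by
      have hcoeff := congrArg (coeff · 1) hfab
      simp only [coeff_add, coeff_X_mul, coeff_eq_zero_of_natDegree_lt (hf.trans_lt one_pos),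
        coeff_eq_zero_of_natDegree_lt (ha.1.trans_lt one_pos), zero_add] at hcoeff
      rw [eq_C_of_natDegree_le_zero hb.1, ← hcoeff, C_0]
    subst hb0
    rw [mul_zero, add_zero] at hfab
    rw [hfab, ha.2, add_zero]
  · rw [Nat.add_sub_cancel] at hb
    rw [hfab, reflect_add, reflect_X_mul hb.1, ha.2, hb.2]

end Semiring

section CommRing

variable [CommRing R]

theorem eval_one_reflect {N : ℕ} {f : R[X]} (hf : f.natDegree ≤ N) :
    (f.reflect N).eval 1 = f.eval 1 := by
  let _ := invertibleOne (α := R)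
  simpa using eval₂_reflect_mul_pow (RingHom.id R) 1 N f hf

theorem isRegular_one_sub_X : IsRegular (1 - X : R[X]) := by
  rw [show (1 - X : R[X]) = (X - C 1) * -1 by simp]
  exact (monic_X_sub_C 1).isRegular.mul isUnit_one.neg.isRegular

theorem one_sub_X_mul_eq_of_eq_add_X_mul {n : ℕ} {f a b : R[X]} (hf : f.natDegree ≤ n)
    (hfab : f = a + X * b) (ha : IsPalindromic n a) (hb : IsPalindromic (n - 1) b) :
    (1 - X) * a = f - X * f.reflect n ∧ (1 - X) * b = f.reflect n - f := by
  rw [reflect_eq_add_of_eq_add_X_mul hf hfab ha hb, hfab]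
  constructor <;> ring

theorem exists_X_sub_one_mul_isPalindromic {m : ℕ} {f : R[X]} (hf : f.natDegree ≤ m + 1) :
    ∃ b, (X - 1) * b = f - f.reflect (m + 1) ∧ IsPalindromic m b := by
  have hroot : (f - f.reflect (m + 1)).IsRoot 1 := by
    rw [IsRoot, eval_sub, eval_one_reflect hf, sub_self]
  set b := (f - f.reflect (m + 1)) /ₘ (X - C 1)
  have hb : (X - 1) * b = f - f.reflect (m + 1) := by
    rw [← C_1]
    exact mul_divByMonic_eq_iff_isRoot.mpr hroot
  have hb_deg : b.natDegree ≤ m := by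
    nontriviality R
    rw [natDegree_divByMonic _ (monic_X_sub_C 1), natDegree_X_sub_C]
    have := (natDegree_sub_le _ _).trans
      (max_le hf (natDegree_reflect_le.trans (max_le le_rfl hf)))
    omega
  refine ⟨b, hb, hb_deg, isRegular_one_sub_X.left ?_⟩
  calc (1 - X) * b.reflect m = ((X - 1) * b).reflect (1 + m) := by
        rw [reflect_mul _ _ (by simpa using natDegree_X_sub_C_le (1 : R)) hb_deg,
          reflect_sub, reflect_one_X, reflect_one, pow_one]
    _ = (1 - X) * b := by
        rw [hb, add_comm, reflect_sub, reflect_reflect, ← neg_sub, ← hb]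
        ring

theorem exists_eq_add_X_mul_isPalindromic {n : ℕ} {f : R[X]} (hf : f.natDegree ≤ n) :
    ∃ a b, f = a + X * b ∧ IsPalindromic n a ∧ IsPalindromic (n - 1) b := by
  rcases n with _ | m
  · refine ⟨f, 0, by rw [mul_zero, add_zero], ⟨hf, ?_⟩, by simp [IsPalindromic]⟩
    rw [eq_C_of_natDegree_le_zero hf, reflect_C, pow_zero, mul_one]
  obtain ⟨b, hb, hb_pal⟩ := exists_X_sub_one_mul_isPalindromic hf
  refine ⟨f - X * b, b, by ring, ⟨?_, ?_⟩, hb_pal⟩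
  · exact (natDegree_sub_le _ _).trans
      (max_le hf ((natDegree_mul_le_of_le natDegree_X_le hb_pal.1).trans (by omega)))
  · rw [reflect_sub, reflect_X_mul hb_pal.1, hb_pal.2]
    linear_combination hb

end CommRing

end Polynomial

/-- **Symmetric decomposition** (Brändén–Solus). Every real polynomial `h` of degree `n`
can be uniquely written as `h = a + X * b` where `a` is palindromic of degree at most `n`
(`x^n a(1/x) = a(x)`, i.e. `reflect n a = a`) and `b` is palindromic of degree at most
`n - 1` (`reflect (n-1) b = b`).  Explicitly, `(1-x)·a = h - x^(n+1)·h(1/x)` and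
`(1-x)·b = x^n·h(1/x) - h`, where `x^n h(1/x) = reflect n h`. -/
theorem symmetric_decomposition (n : ℕ) (h : Polynomial ℝ) (hn : h.natDegree = n) :
    (∃! ab : Polynomial ℝ × Polynomial ℝ,
      h = ab.1 + X * ab.2 ∧
      ab.1.natDegree ≤ n ∧ ab.1.reflect n = ab.1 ∧
      ab.2.natDegree ≤ n - 1 ∧ ab.2.reflect (n - 1) = ab.2) ∧
    (∀ a b : Polynomial ℝ,
      (h = a + X * b ∧ a.natDegree ≤ n ∧ a.reflect n = a ∧
        b.natDegree ≤ n - 1 ∧ b.reflect (n - 1) = b) →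
      (1 - X) * a = h - X * h.reflect n ∧ (1 - X) * b = h.reflect n - h) := by
  have formulas : ∀ a b : ℝ[X], (h = a + X * b ∧ a.natDegree ≤ n ∧ a.reflect n = a ∧
      b.natDegree ≤ n - 1 ∧ b.reflect (n - 1) = b) →
      (1 - X) * a = h - X * h.reflect n ∧ (1 - X) * b = h.reflect n - h :=
    fun a b ⟨hab, ha, ha', hb, hb'⟩ =>
      one_sub_X_mul_eq_of_eq_add_X_mul hn.le hab ⟨ha, ha'⟩ ⟨hb, hb'⟩
  refine ⟨?_, formulas⟩
  obtain ⟨a, b, hab, ha, hb⟩ := exists_eq_add_X_mul_isPalindromic hn.le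
  refine ⟨(a, b), ⟨hab, ha.1, ha.2, hb.1, hb.2⟩, ?_⟩
  rintro ⟨a', b'⟩ hab'
  obtain ⟨hfa', hfb'⟩ := formulas a' b' hab'
  obtain ⟨hfa, hfb⟩ := formulas a b ⟨hab, ha.1, ha.2, hb.1, hb.2⟩
  exact Prod.ext (isRegular_one_sub_X.left (hfa'.trans hfa.symm))
    (isRegular_one_sub_X.left (hfb'.trans hfb.symm))
end

section
/- If a polynomial h(x) = a(x) + x·b(x) is bi-γ-positive, i.e., a(x) = Σ_k γ_k x^k (1+x)^(n-2k) and b(x) = Σ_k δ_k x^k (1+x)^(n-1-2k) with all γ_k, δ_k ≥ 0, then h is alternating increasing: its coefficients satisfy a_0 ≤ a_n ≤ a_1 ≤ a_{n-1} ≤ ... ≤ a_{⌊(n+1)/2⌋}. -/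
/-!
Every term `x^i (1+x)^(m-2i)` of a γ-expansion with center `m/2` has coefficients
`binom(m-2i, j-i)`, which are symmetric about `m/2` and increase up to it. Hence the coefficients
of `a` are symmetric about `n/2` and increase up to it, and those of `b` do the same about
`(n-1)/2`; multiplying by `x` moves the center of `b` to `(n+1)/2`. So in `h_j ≤ h_{n-j}` the
contributions of `a` agree and those of `x·b` compare by monotonicity, while in
`h_{n-j} ≤ h_{j+1}` the contributions of `x·b` agree and those of `a` compare by monotonicity.
-/

theorem Nat.choose_le_choose_succ_of_two_mul_lt {N k : ℕ} (hk : 2 * k < N) :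
    N.choose k ≤ N.choose (k + 1) := by
  rcases Nat.lt_or_ge (2 * k + 1) N with hlt | hge
  · exact Nat.choose_le_succ_of_lt_half_left (by omega)
  · obtain rfl : N = 2 * k + 1 := by omega
    exact (Nat.choose_symm_half k).ge

namespace Polynomial

variable {R : Type*} [Semiring R]

theorem coeff_X_pow_mul_one_add_X_pow (i r j : ℕ) :
    (X ^ i * (1 + X) ^ r : R[X]).coeff j = if i ≤ j then (r.choose (j - i) : R) else 0 := by
  rw [coeff_X_pow_mul', coeff_one_add_X_pow]

theorem coeff_X_pow_mul_one_add_X_pow_sub_symm {i m j : ℕ} (hi : 2 * i ≤ m) (hj : j ≤ m) :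
    (X ^ i * (1 + X) ^ (m - 2 * i) : R[X]).coeff (m - j) =
      (X ^ i * (1 + X) ^ (m - 2 * i) : R[X]).coeff j := by
  rw [coeff_X_pow_mul_one_add_X_pow, coeff_X_pow_mul_one_add_X_pow]
  split_ifs with h₁ h₂ h₂
  · rw [Nat.choose_symm_of_eq_add (show m - 2 * i = m - j - i + (j - i) by omega)]
  · rw [Nat.choose_eq_zero_of_lt (by omega), Nat.cast_zero]
  · rw [Nat.choose_eq_zero_of_lt (by omega), Nat.cast_zero]
  · rfl

noncomputable def gammaPoly (m : ℕ) (w : ℕ → R) : R[X] :=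
  ∑ i ∈ Finset.range (m / 2 + 1), C (w i) * X ^ i * (1 + X) ^ (m - 2 * i)

theorem coeff_gammaPoly (m : ℕ) (w : ℕ → R) (j : ℕ) :
    (gammaPoly m w).coeff j = ∑ i ∈ Finset.range (m / 2 + 1),
      w i * (X ^ i * (1 + X) ^ (m - 2 * i) : R[X]).coeff j := by
  simp only [gammaPoly, finsetSum_coeff, mul_assoc, coeff_C_mul]

theorem coeff_gammaPoly_sub_symm (m : ℕ) (w : ℕ → R) {j : ℕ} (hj : j ≤ m) :
    (gammaPoly m w).coeff (m - j) = (gammaPoly m w).coeff j := by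
  simp only [coeff_gammaPoly]
  refine Finset.sum_congr rfl fun i hmem => ?_
  rw [coeff_X_pow_mul_one_add_X_pow_sub_symm (by grind) hj]

variable [PartialOrder R] [IsOrderedRing R] {w : ℕ → R}

theorem coeff_gammaPoly_nonneg (m : ℕ) (hw : ∀ i, 0 ≤ w i) (j : ℕ) :
    0 ≤ (gammaPoly m w).coeff j := by
  rw [coeff_gammaPoly]
  refine Finset.sum_nonneg fun i _ => mul_nonneg (hw i) ?_
  rw [coeff_X_pow_mul_one_add_X_pow]
  split_ifs <;> positivity

theorem coeff_gammaPoly_le_succ {m : ℕ} (hw : ∀ i, 0 ≤ w i) {j : ℕ} (hj : 2 * j < m) :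
    (gammaPoly m w).coeff j ≤ (gammaPoly m w).coeff (j + 1) := by
  simp only [coeff_gammaPoly]
  refine Finset.sum_le_sum fun i hmem => mul_le_mul_of_nonneg_left ?_ (hw i)
  have hi : 2 * i ≤ m := by grind
  simp only [coeff_X_pow_mul_one_add_X_pow]
  split_ifs with h₁ h₂
  · rw [show j + 1 - i = j - i + 1 by omega]
    exact Nat.mono_cast (Nat.choose_le_choose_succ_of_two_mul_lt (by omega))
  · omega
  · positivity
  · rfl

end Polynomial

open Polynomial

/-- If `h = a + x·b` is bi-γ-positive, i.e. `a = Σ γ_k x^k (1+x)^(n-2k)` and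
`b = Σ δ_k x^k (1+x)^(n-1-2k)` with all `γ_k, δ_k ≥ 0`, then `h` is alternating
increasing: `a_0 ≤ a_n ≤ a_1 ≤ a_{n-1} ≤ ⋯ ≤ a_{⌊(n+1)/2⌋}`. -/
theorem bi_gamma_positive_alternating_increasing (n : ℕ) (h : Polynomial ℝ)
    (γ δ : ℕ → ℝ) (hγ : ∀ i, 0 ≤ γ i) (hδ : ∀ i, 0 ≤ δ i)
    (hh : h =
      (∑ i ∈ Finset.range (n / 2 + 1), C (γ i) * X ^ i * (1 + X) ^ (n - 2 * i)) +
      X * ∑ i ∈ Finset.range ((n - 1) / 2 + 1),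
        C (δ i) * X ^ i * (1 + X) ^ (n - 1 - 2 * i)) :
    (∀ j : ℕ, 2 * j ≤ n → h.coeff j ≤ h.coeff (n - j)) ∧
    (∀ j : ℕ, 2 * j + 1 ≤ n → h.coeff (n - j) ≤ h.coeff (j + 1)) := by
  change h = gammaPoly n γ + X * gammaPoly (n - 1) δ at hh
  subst hh
  set b := gammaPoly (n - 1) δ
  have hb_symm {k : ℕ} (hk : k + 1 ≤ n) : b.coeff (n - 1 - k) = b.coeff k :=
    coeff_gammaPoly_sub_symm _ _ (by omega)
  refine ⟨fun j hj => ?_, fun j hj => ?_⟩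
  · simp only [coeff_add, coeff_gammaPoly_sub_symm n γ (by omega : j ≤ n)]
    gcongr
    rcases j with _ | k
    · rcases n with _ | n
      · rfl
      · simpa [coeff_X_mul] using coeff_gammaPoly_nonneg _ hδ n
    · rw [show n - (k + 1) = n - 1 - (k + 1) + 1 by omega, coeff_X_mul, coeff_X_mul,
        hb_symm (by omega)]
      exact coeff_gammaPoly_le_succ hδ (by omega)
  · rw [coeff_add, coeff_add, coeff_gammaPoly_sub_symm n γ (by omega),
      show n - j = n - 1 - j + 1 by omega, coeff_X_mul, coeff_X_mul, hb_symm (by omega)]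
    gcongr
    exact coeff_gammaPoly_le_succ hγ (by omega)
end

section
/- For every n ≥ 1 and k ≥ 1, the 1/k-Eulerian polynomial satisfies A_n^{(k)}(x) = Σ_{π ∈ Q_n(k)} x^{ap(π)}, where Q_n(k) is the set of k-Stirling permutations of order n and ap(π) is the number of longest ascent-plateaux of π. -/
open Polynomial
open scoped Classical

noncomputable section

/-- Number of longest ascent-plateaux of the length-`L` word `v` (values in `ℕ`):
indices `i` with `v i < v (i+1) = v (i+2) = ⋯ = v (i+k)`. -/
def apWord (k L : ℕ) (v : ℕ → ℕ) : ℕ :=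
  ((Finset.range L).filter fun i =>
    i + k < L ∧ v i < v (i + 1) ∧ ∀ j < k, v (i + 1 + j) = v (i + 1)).card

/-- `w : Fin (k*n) → Fin n` is a `k`-Stirling permutation of order `n`: every letter
occurs exactly `k` times and letters lying between two equal letters are at least as
large. -/
def IsKStirling (k n : ℕ) (w : Fin (k * n) → Fin n) : Prop :=
  (∀ m : Fin n, (Finset.univ.filter fun i => w i = m).card = k) ∧
  (∀ i j l : Fin (k * n), i ≤ j → j ≤ l → w i = w l → w i ≤ w j)

/-- The word (with values in `{1,…,n}` and junk value `0` out of range) associated to a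
`k`-Stirling permutation. -/
def wordOf (k n : ℕ) (w : Fin (k * n) → Fin n) : ℕ → ℕ :=
  fun i => if h : i < k * n then (w ⟨i, h⟩ : ℕ) + 1 else 0

/-- The number `ap(π)` of longest ascent-plateaux of a `k`-Stirling permutation. -/
def apStat (k n : ℕ) (w : Fin (k * n) → Fin n) : ℕ :=
  apWord k (k * n) (wordOf k n w)

/-- The number `lap(π)` of left longest ascent-plateaux: longest ascent-plateaux of the
word `0π` obtained by prepending a zero. -/
def lapStat (k n : ℕ) (w : Fin (k * n) → Fin n) : ℕ :=
  apWord k (k * n + 1) (fun i => if i = 0 then 0 else wordOf k n w (i - 1))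

/-- The EGF condition `(Σ_n A_n z^n/n!)^k · (e^{kz(x-1)} - x) = 1 - x`, i.e.
`Σ_{n≥0} A_n(x) z^n/n! = ((1-x)/(e^{kz(x-1)} - x))^{1/k}`. -/
def EGFcond (k : ℕ) (A : ℕ → Polynomial ℝ) : Prop :=
  (PowerSeries.mk fun n => ((n.factorial : ℝ)⁻¹) • A n) ^ k *
      ((PowerSeries.mk fun n => ((n.factorial : ℝ)⁻¹) • ((C (k : ℝ)) * (X - 1)) ^ n) -
        (PowerSeries.C : Polynomial ℝ →+* PowerSeries (Polynomial ℝ)) X) =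
    (PowerSeries.C : Polynomial ℝ →+* PowerSeries (Polynomial ℝ)) (1 - X)

/-!
Both sides satisfy `A₀ = 1` and `A_{n+1} = (1 + knx) A_n + kx(1 - x) A_n'`.

Combinatorially, every `π ∈ Q_{n+1}` arises exactly once by inserting the block `(n+1)^k` into
one of the `kn + 1` gaps of some `σ ∈ Q_n`. Inserting it in front creates no plateau; inserting
it into one of the `k` gaps that cut a longest ascent-plateau of `σ` destroys that plateau and
creates one. Each of the other `kn - k·ap(σ)` gaps creates a new plateau and destroys none.

Analytically, differentiating `F^k (e^{kz(x-1)} - x) = 1 - x` in `z` and in `x` and eliminating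
gives `F_z = F + kxz F_z + kx(1 - x) F_x`, whose coefficients are the same recurrence.
-/

open scoped PowerSeries

section Derivations

variable {S A : Type*} [CommSemiring S] [CommRing A] [Algebra S A]

def Derivation.mapPowerSeries (d : Derivation S A A) : Derivation S A⟦X⟧ A⟦X⟧ :=
  Derivation.mk'
    { toFun := fun f => PowerSeries.mk fun n => d (PowerSeries.coeff n f)
      map_add' := fun f g => by ext; simp
      map_smul' := fun s f => by ext; simp }
    fun f g => by
      ext n
      rw [smul_eq_mul, smul_eq_mul, mul_comm g]
      simp only [LinearMap.coe_mk, AddHom.coe_mk, PowerSeries.coeff_mk, PowerSeries.coeff_mul,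
        map_add, map_sum, Derivation.leibniz, smul_eq_mul, Finset.sum_add_distrib]
      simp only [mul_comm (PowerSeries.coeff _ g)]

@[simp]
theorem Derivation.coeff_mapPowerSeries (d : Derivation S A A) (f : A⟦X⟧) (n : ℕ) :
    PowerSeries.coeff n (d.mapPowerSeries f) = d (PowerSeries.coeff n f) := by
  simp [Derivation.mapPowerSeries]

theorem Derivation.mapPowerSeries_C (d : Derivation S A A) (a : A) :
    d.mapPowerSeries (PowerSeries.C a) = PowerSeries.C (d a) := by
  ext (_ | n) <;> simp [PowerSeries.coeff_C]

end Derivations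

-- The algebra structures are read off the derivations: `ℝ[X]⟦X⟧` carries two different
-- `ℝ[X]`-algebra structures, and instance search finds the wrong one for `d⁄dX ℝ[X]`.
theorem Derivation.pde_of_pow_mul_sub_eq {R S S' : Type*} [CommRing R] [IsDomain R]
    [CommSemiring S] [CommSemiring S'] {_ : Algebra S R} {_ : Algebra S' R}
    (Dz : Derivation S R R) (Dx : Derivation S' R R) {k : ℕ} {F E c z : R}
    (h : F ^ k * (E - c) = 1 - c)
    (hEz : Dz E = k * (c - 1) * E) (hcz : Dz c = 0) (hEx : Dx E = k * z * E) (hcx : Dx c = 1)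
    (hne : (k : R) * F ^ (k - 1) * (E - c) ≠ 0) :
    Dz F = F + k * c * z * Dz F + k * c * (1 - c) * Dx F := by
  obtain _ | k := k
  · simp at hne
  rw [Nat.add_sub_cancel] at hne
  have hz := congrArg Dz h
  have hx := congrArg Dx h
  simp only [Derivation.leibniz, Derivation.leibniz_pow, map_sub, Derivation.map_one_eq_zero,
    hEz, hcz, hEx, hcx, smul_eq_mul, nsmul_eq_mul, Nat.add_sub_cancel] at hz hx
  push_cast at *
  -- after multiplying by `k F^(k-1) (E - c)`, every term is supplied by `h`, `hz` or `hx`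
  apply mul_left_cancel₀ hne
  linear_combination (1 - (k + 1) * c * z) * hz - (k + 1) * c * h - (k + 1) * c * (1 - c) * hx

namespace PowerSeries

variable {A : Type*} [CommRing A] [Algebra ℝ A]

def egf (a : ℕ → A) : A⟦X⟧ :=
  PowerSeries.mk fun n => (n.factorial : ℝ)⁻¹ • a n

@[simp]
theorem coeff_egf (a : ℕ → A) (n : ℕ) :
    PowerSeries.coeff n (egf a) = (n.factorial : ℝ)⁻¹ • a n :=
  PowerSeries.coeff_mk _ _

@[simp]
theorem constantCoeff_egf (a : ℕ → A) : PowerSeries.constantCoeff (egf a) = a 0 := by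
  simp [← PowerSeries.coeff_zero_eq_constantCoeff_apply]

theorem egf_injective : Function.Injective (egf (A := A)) := by
  intro a b h
  funext n
  have := congrArg (PowerSeries.coeff n) h
  rwa [coeff_egf, coeff_egf, smul_right_inj (inv_ne_zero (by positivity))] at this

theorem egf_add (a b : ℕ → A) : egf (fun n => a n + b n) = egf a + egf b := by
  ext n
  simp

theorem C_mul_egf (r : A) (a : ℕ → A) : PowerSeries.C r * egf a = egf fun n => r * a n := by
  ext n
  simp

theorem inv_factorial_succ_smul_natCast_mul (n : ℕ) (x : A) :
    ((n + 1).factorial : ℝ)⁻¹ • (((n + 1 : ℕ) : A) * x) = (n.factorial : ℝ)⁻¹ • x := by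
  rw [← nsmul_eq_mul, ← Nat.cast_smul_eq_nsmul ℝ, smul_smul, Nat.factorial_succ]
  congr 1
  push_cast
  field_simp

theorem derivative_egf (a : ℕ → A) : d⁄dX A (egf a) = egf fun n => a (n + 1) := by
  ext n
  rw [PowerSeries.coeff_derivative, coeff_egf, coeff_egf, smul_mul_assoc, mul_comm,
    ← Nat.cast_succ, inv_factorial_succ_smul_natCast_mul]

theorem X_mul_egf (a : ℕ → A) : PowerSeries.X * egf a = egf fun n => n * a (n - 1) := by
  ext (_ | n)
  · simp
  · rw [PowerSeries.coeff_succ_X_mul, coeff_egf, coeff_egf, Nat.add_sub_cancel,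
      inv_factorial_succ_smul_natCast_mul]

theorem X_mul_derivative_egf (a : ℕ → A) :
    PowerSeries.X * d⁄dX A (egf a) = egf fun n => n * a n := by
  rw [derivative_egf, X_mul_egf]
  congr 1
  funext n
  cases n <;> simp

theorem _root_.Derivation.mapPowerSeries_egf (d : Derivation ℝ A A) (a : ℕ → A) :
    d.mapPowerSeries (egf a) = egf fun n => d (a n) := by
  ext n
  simp

end PowerSeries

namespace KStirling

open Finset

def eulerianStep (k n : ℕ) : ℝ[X] →ₗ[ℝ] ℝ[X] :=
  LinearMap.mulLeft ℝ (1 + ((k * n : ℕ) : ℝ[X]) * X) +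
    LinearMap.mulLeft ℝ ((k : ℝ[X]) * X * (1 - X)) ∘ₗ derivative

@[simp]
theorem eulerianStep_apply (k n : ℕ) (P : ℝ[X]) :
    eulerianStep k n P =
      (1 + ((k * n : ℕ) : ℝ[X]) * X) * P + (k : ℝ[X]) * X * (1 - X) * derivative P :=
  rfl

section Words

variable {k L : ℕ}

def apSet (k L : ℕ) (v : ℕ → ℕ) : Finset ℕ :=
  (range L).filter fun i => i + k < L ∧ v i < v (i + 1) ∧ ∀ j < k, v (i + 1 + j) = v (i + 1)

theorem apWord_eq_card_apSet (v : ℕ → ℕ) : apWord k L v = #(apSet k L v) :=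
  rfl

theorem mem_apSet {v : ℕ → ℕ} {i : ℕ} :
    i ∈ apSet k L v ↔ i + k < L ∧ v i < v (i + 1) ∧ ∀ j < k, v (i + 1 + j) = v (i + 1) := by
  rw [apSet, mem_filter, mem_range, and_iff_right_iff_imp]
  omega

theorem mem_apSet_congr (hk : 0 < k) {L' : ℕ} {u v : ℕ → ℕ} {i i' : ℕ}
    (hL : i + k < L ↔ i' + k < L') (h : ∀ t ≤ k, u (i + t) = v (i' + t)) :
    i ∈ apSet k L u ↔ i' ∈ apSet k L' v := by
  have h1 := h 1 hk
  have h0 := h 0 k.zero_le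
  simp only [add_zero] at h0
  simp only [mem_apSet, hL, h0, h1]
  refine and_congr_right fun _ => and_congr_right fun _ => forall₂_congr fun j hj => ?_
  rw [add_assoc, h (1 + j) (by omega), ← add_assoc]

theorem apSet_congr (hk : 0 < k) {u v : ℕ → ℕ} (h : ∀ i < L, u i = v i) :
    apSet k L u = apSet k L v := by
  ext i
  by_cases hi : i + k < L
  · exact mem_apSet_congr hk Iff.rfl fun t ht => h _ (by omega)
  · simp [mem_apSet, hi]

theorem add_le_of_mem_apSet {v : ℕ → ℕ} {i i' : ℕ} (hi : i ∈ apSet k L v)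
    (hi' : i' ∈ apSet k L v) (hii' : i < i') : i + k ≤ i' := by
  by_contra! hlt
  obtain ⟨-, -, hplat⟩ := mem_apSet.1 hi
  obtain ⟨-, hasc, -⟩ := mem_apSet.1 hi'
  have e0 := hplat (i' - (i + 1)) (by omega)
  have e1 := hplat (i' - i) (by omega)
  rw [show i + 1 + (i' - (i + 1)) = i' by omega] at e0
  rw [show i + 1 + (i' - i) = i' + 1 by omega] at e1
  omega

def insertBlock (p k c : ℕ) (u : ℕ → ℕ) : ℕ → ℕ :=
  fun i => if i < p then u i else if i < p + k then c else u (i - k)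

variable {p n : ℕ} {u : ℕ → ℕ}

theorem insertBlock_of_lt {i : ℕ} (h : i < p) : insertBlock p k n u i = u i :=
  if_pos h

theorem insertBlock_of_mem {i : ℕ} (h₁ : p ≤ i) (h₂ : i < p + k) : insertBlock p k n u i = n := by
  simp [insertBlock, h₂, not_lt.2 h₁]

theorem insertBlock_of_le {i : ℕ} (h : p + k ≤ i) : insertBlock p k n u i = u (i - k) := by
  simp [insertBlock, show ¬i < p by omega, not_lt.2 h]

theorem mem_apSet_insertBlock_iff_of_lt (hk : 0 < k) (hp : p ≤ L) {i : ℕ} (hi : i + k < p) :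
    i ∈ apSet k (L + k) (insertBlock p k n u) ↔ i ∈ apSet k L u :=
  mem_apSet_congr hk (by omega) fun _ _ => insertBlock_of_lt (by omega)

theorem add_mem_apSet_insertBlock_iff (hk : 0 < k) {i : ℕ} (hi : p ≤ i) :
    i + k ∈ apSet k (L + k) (insertBlock p k n u) ↔ i ∈ apSet k L u :=
  mem_apSet_congr hk (by omega) fun t _ => by
    rw [insertBlock_of_le (by omega), show i + k + t - k = i + t by omega]

theorem pred_mem_apSet_insertBlock (hk : 0 < k) (hp : p ≤ L) (hp0 : p ≠ 0)
    (hu : ∀ i < L, u i ≤ n) : p - 1 ∈ apSet k (L + k) (insertBlock p k (n + 1) u) := by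
  refine mem_apSet.2 ⟨by omega, ?_, fun j hj => ?_⟩
  · rw [insertBlock_of_lt (by omega), insertBlock_of_mem (by omega) (by omega)]
    exact Nat.lt_succ_of_le (hu _ (by omega))
  · rw [insertBlock_of_mem (by omega) (by omega), insertBlock_of_mem (by omega) (by omega)]

theorem eq_pred_of_mem_apSet_insertBlock (hp : p ≤ L) (hu : ∀ i < L, u i ≤ n) {i : ℕ}
    (hi : i ∈ apSet k (L + k) (insertBlock p k (n + 1) u)) (h₁ : p ≤ i + k) (h₂ : i < p + k) :
    i + 1 = p := by
  obtain ⟨hiL, hasc, hplat⟩ := mem_apSet.1 hi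
  by_contra hne
  rcases lt_or_ge i p with hip | hip
  · have hpl := hplat (p - (i + 1)) (by omega)
    rw [show i + 1 + (p - (i + 1)) = p by omega, insertBlock_of_mem le_rfl (by omega),
      insertBlock_of_lt (by omega)] at hpl
    have := hu (i + 1) (by omega)
    omega
  · rw [insertBlock_of_mem hip h₂] at hasc
    rcases lt_or_ge (i + 1) (p + k) with h | h
    · rw [insertBlock_of_mem (by omega) h] at hasc
      exact lt_irrefl _ hasc
    · rw [insertBlock_of_le h] at hasc
      have := hu (i + 1 - k) (by omega)
      omega

-- The plateaux broken by inserting the block before position `p`.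
def cutSet (k L : ℕ) (u : ℕ → ℕ) (p : ℕ) : Finset ℕ :=
  (apSet k L u).filter fun i => p ∈ Ioc i (i + k)

theorem card_cutSet_le_one : #(cutSet k L u p) ≤ 1 := by
  refine card_le_one.2 fun i hi i' hi' => ?_
  simp only [cutSet, mem_filter, mem_Ioc] at hi hi'
  rcases lt_trichotomy i i' with h | h | h
  · have := add_le_of_mem_apSet hi.1 hi'.1 h
    omega
  · exact h
  · have := add_le_of_mem_apSet hi'.1 hi.1 h
    omega

theorem apSet_insertBlock (hk : 0 < k) (hp : p ≤ L) (hu : ∀ i < L, u i ≤ n) :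
    apSet k (L + k) (insertBlock p k (n + 1) u) =
      (if p = 0 then ∅ else {p - 1}) ∪
        ((apSet k L u).filter fun i => p ∉ Ioc i (i + k)).image
          fun i => if i < p then i else i + k := by
  ext m
  simp only [mem_union, mem_image, mem_filter, mem_Ioc, not_and_or, not_lt, not_le]
  constructor
  · intro hm
    by_cases h₁ : m + k < p
    · exact .inr ⟨m, ⟨(mem_apSet_insertBlock_iff_of_lt hk hp h₁).1 hm, by omega⟩, if_pos (by omega)⟩
    by_cases h₂ : p + k ≤ m
    · obtain ⟨i, rfl⟩ : ∃ i, m = i + k := ⟨m - k, by omega⟩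
      exact .inr ⟨i, ⟨(add_mem_apSet_insertBlock_iff hk (by omega)).1 hm, by omega⟩,
        if_neg (by omega)⟩
    · have := eq_pred_of_mem_apSet_insertBlock hp hu hm (by omega) (by omega)
      exact .inl (by simp [show p ≠ 0 by omega]; omega)
  · rintro (hm | ⟨i, ⟨hi, hcut⟩, rfl⟩)
    · split_ifs at hm with hp0
      · simp at hm
      · rw [mem_singleton.1 hm]
        exact pred_mem_apSet_insertBlock hk hp hp0 hu
    · split_ifs with hip
      · exact (mem_apSet_insertBlock_iff_of_lt hk hp (by omega)).2 hi
      · exact (add_mem_apSet_insertBlock_iff hk (by omega)).2 hi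

theorem card_apSet_insertBlock_add_card_cutSet (hk : 0 < k) (hp : p ≤ L)
    (hu : ∀ i < L, u i ≤ n) :
    #(apSet k (L + k) (insertBlock p k (n + 1) u)) + #(cutSet k L u p) =
      (if p = 0 then 0 else 1) + #(apSet k L u) := by
  rw [apSet_insertBlock hk hp hu, card_union_of_disjoint, card_image_of_injOn, add_assoc,
    cutSet, add_comm #(filter _ _), card_filter_add_card_filter_not]
  · split_ifs <;> simp
  · intro i hi i' hi' h
    simp only [coe_filter, Set.mem_ofPred_eq, mem_Ioc, not_and_or, not_lt, not_le] at hi hi' h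
    split_ifs at h <;> omega
  · refine disjoint_left.2 fun m hm hm' => ?_
    split_ifs at hm with hp0
    · simp at hm
    · obtain ⟨i, hi, rfl⟩ := mem_image.1 hm'
      simp only [mem_filter, mem_Ioc, not_and_or, not_lt, not_le] at hi
      rw [mem_singleton] at hm
      split_ifs at hm <;> omega

-- Inserting the block at these positions does not increase the number of plateaux.
def badSet (k L : ℕ) (u : ℕ → ℕ) : Finset ℕ :=
  insert 0 ((apSet k L u).biUnion fun i => Ioc i (i + k))

theorem mem_badSet : p ∈ badSet k L u ↔ p = 0 ∨ (cutSet k L u p).Nonempty := by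
  simp [badSet, cutSet, Finset.Nonempty]

theorem badSet_subset_range : badSet k L u ⊆ range (L + 1) := by
  intro p hp
  simp only [badSet, mem_insert, mem_biUnion, mem_Ioc] at hp
  rcases hp with rfl | ⟨i, hi, -, hp⟩
  · simp
  · have := (mem_apSet.1 hi).1
    rw [mem_range]
    omega

theorem card_badSet : #(badSet k L u) = 1 + k * #(apSet k L u) := by
  rw [badSet, card_insert_of_notMem (by simp), card_biUnion, sum_const_nat fun i _ => ?_,
    add_comm, mul_comm]
  · simp
  · intro i hi i' hi' hne
    rcases hne.lt_or_gt with h | h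
    · have := add_le_of_mem_apSet hi hi' h
      exact disjoint_left.2 fun t ht ht' => by simp only [mem_Ioc] at ht ht'; omega
    · have := add_le_of_mem_apSet hi' hi h
      exact disjoint_left.2 fun t ht ht' => by simp only [mem_Ioc] at ht ht'; omega

theorem card_apSet_insertBlock (hk : 0 < k) (hp : p ≤ L) (hu : ∀ i < L, u i ≤ n) :
    #(apSet k (L + k) (insertBlock p k (n + 1) u)) =
      #(apSet k L u) + if p ∈ badSet k L u then 0 else 1 := by
  have hcard := card_apSet_insertBlock_add_card_cutSet hk hp hu
  have hcut := card_cutSet_le_one (k := k) (L := L) (u := u) (p := p)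
  simp only [mem_badSet, ← card_pos]
  by_cases hp0 : p = 0
  · subst hp0
    have : cutSet k L u 0 = ∅ := filter_eq_empty_iff.2 fun i _ => by simp
    simp_all
  · split_ifs at hcard ⊢ <;> omega

theorem sum_X_pow_card_apSet_insertBlock (hk : 0 < k) (hu : ∀ i < L, u i ≤ n) :
    ∑ p ∈ range (L + 1), (X : ℝ[X]) ^ #(apSet k (L + k) (insertBlock p k (n + 1) u)) =
      (1 + k * #(apSet k L u) : ℕ) • X ^ #(apSet k L u)
        + (L - k * #(apSet k L u)) • X ^ (#(apSet k L u) + 1) := by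
  have hbad := badSet_subset_range (k := k) (L := L) (u := u)
  have hcard : ∀ p ∈ range (L + 1), #(apSet k (L + k) (insertBlock p k (n + 1) u)) =
      #(apSet k L u) + if p ∈ badSet k L u then 0 else 1 := fun p hp =>
    card_apSet_insertBlock hk (Nat.lt_succ_iff.1 (mem_range.1 hp)) hu
  have hon : ∀ p ∈ badSet k L u,
      (X : ℝ[X]) ^ #(apSet k (L + k) (insertBlock p k (n + 1) u)) = X ^ #(apSet k L u) :=
    fun p hp => by rw [hcard p (hbad hp), if_pos hp, add_zero]
  have hoff : ∀ p ∈ range (L + 1) \ badSet k L u,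
      (X : ℝ[X]) ^ #(apSet k (L + k) (insertBlock p k (n + 1) u)) = X ^ (#(apSet k L u) + 1) :=
    fun p hp => by rw [hcard p (mem_sdiff.1 hp).1, if_neg (mem_sdiff.1 hp).2]
  rw [← sum_sdiff hbad, add_comm, sum_congr rfl hon, sum_congr rfl hoff, sum_const, sum_const,
    card_sdiff_of_subset hbad, card_badSet, card_range, add_comm L 1, Nat.add_sub_add_left]

end Words

section Insertion

variable {k n : ℕ}

def skipBlock (k n : ℕ) (p : Fin (k * n + 1)) : Fin (k * n) ↪o Fin (k * (n + 1)) :=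
  OrderEmbedding.ofStrictMono
    (fun i => ⟨if (i : ℕ) < p then (i : ℕ) else i + k, by
      have := mul_add_one k n
      split_ifs <;> omega⟩)
    fun a b h => by
      simp only [Fin.lt_def] at h ⊢
      split_ifs <;> omega

theorem val_skipBlock (p : Fin (k * n + 1)) (i : Fin (k * n)) :
    (skipBlock k n p i : ℕ) = if (i : ℕ) < p then (i : ℕ) else i + k :=
  rfl

theorem exists_skipBlock_eq (p : Fin (k * n + 1)) {j : Fin (k * (n + 1))}
    (hj : ¬((p : ℕ) ≤ j ∧ (j : ℕ) < p + k)) : ∃ i, skipBlock k n p i = j := by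
  have := mul_add_one k n
  by_cases h : (j : ℕ) < p
  · exact ⟨⟨j, by omega⟩, Fin.ext (by simp [val_skipBlock, h])⟩
  · exact ⟨⟨j - k, by omega⟩, Fin.ext (by rw [val_skipBlock, if_neg (by simp; omega)]; simp; omega)⟩

def insertMax (k n : ℕ) (p : Fin (k * n + 1)) (w : Fin (k * n) → Fin n) :
    Fin (k * (n + 1)) → Fin (n + 1) := fun j =>
  if h : (j : ℕ) < p then (w ⟨j, by omega⟩).castSucc
  else if h' : (j : ℕ) < p + k then Fin.last n
  else (w ⟨j - k, by have := mul_add_one k n; omega⟩).castSucc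

theorem insertMax_skipBlock (p : Fin (k * n + 1)) (w : Fin (k * n) → Fin n) (i : Fin (k * n)) :
    insertMax k n p w (skipBlock k n p i) = (w i).castSucc := by
  by_cases h : (i : ℕ) < p
  · simp [insertMax, val_skipBlock, h]
  · simp [insertMax, val_skipBlock, h, show ¬(i : ℕ) + k < p by omega]

theorem insertMax_eq_last_iff (p : Fin (k * n + 1)) (w : Fin (k * n) → Fin n)
    (j : Fin (k * (n + 1))) : insertMax k n p w j = Fin.last n ↔ (p : ℕ) ≤ j ∧ (j : ℕ) < p + k := by
  unfold insertMax
  split_ifs <;> simp [Fin.castSucc_ne_last, *]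
  omega

theorem card_insertMax_eq_castSucc (p : Fin (k * n + 1)) (w : Fin (k * n) → Fin n) (m : Fin n) :
    #{j | insertMax k n p w j = m.castSucc} = #{i | w i = m} := by
  rw [← card_map (skipBlock k n p).toEmbedding]
  congr 1
  ext j
  simp only [mem_map, mem_filter, mem_univ, true_and, RelEmbedding.coe_toEmbedding]
  constructor
  · intro hj
    obtain ⟨i, rfl⟩ := exists_skipBlock_eq p (j := j) fun hb =>
      Fin.castSucc_ne_last m (hj.symm.trans ((insertMax_eq_last_iff p w j).2 hb))
    exact ⟨i, Fin.castSucc_injective _ ((insertMax_skipBlock p w i).symm.trans hj), rfl⟩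
  · rintro ⟨i, rfl, rfl⟩
    exact insertMax_skipBlock p w i

theorem card_insertMax_eq_last (p : Fin (k * n + 1)) (w : Fin (k * n) → Fin n) :
    #{j | insertMax k n p w j = Fin.last n} = k := by
  have := mul_add_one k n
  simp_rw [insertMax_eq_last_iff]
  rw [← card_map Fin.valEmbedding]
  refine (congrArg card ?_).trans (Nat.card_Ico p (p + k) |>.trans (by omega))
  ext a
  simp only [mem_map, mem_filter, mem_univ, true_and, Fin.valEmbedding_apply, mem_Ico]
  constructor
  · rintro ⟨j, hj, rfl⟩
    exact hj
  · intro ha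
    exact ⟨⟨a, by omega⟩, ha, rfl⟩

theorem isKStirling_insertMax_iff (p : Fin (k * n + 1)) (w : Fin (k * n) → Fin n) :
    IsKStirling k (n + 1) (insertMax k n p w) ↔ IsKStirling k n w := by
  have hlast := insertMax_eq_last_iff p w
  have hskip := insertMax_skipBlock p w
  refine and_congr ?_ ⟨fun h i j l hij hjl hil => ?_, fun h i j l hij hjl hil => ?_⟩
  · simp [Fin.forall_fin_succ', card_insertMax_eq_castSucc, card_insertMax_eq_last]
  · have := h _ _ _ ((skipBlock k n p).le_iff_le.2 hij) ((skipBlock k n p).le_iff_le.2 hjl)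
      (by rw [hskip, hskip, hil])
    rwa [hskip, hskip, Fin.castSucc_le_castSucc_iff] at this
  · by_cases hj : insertMax k n p w j = Fin.last n
    · exact hj ▸ Fin.le_last _
    have hi : ¬((p : ℕ) ≤ i ∧ (i : ℕ) < p + k) := fun hi => hj <| (hlast j).2 <| by
      have := (hlast l).1 (hil ▸ (hlast i).2 hi)
      rw [Fin.le_def] at hij hjl
      omega
    have hl : ¬((p : ℕ) ≤ l ∧ (l : ℕ) < p + k) := fun hl =>
      hi ((hlast i).1 (hil.trans ((hlast l).2 hl)))
    obtain ⟨a, rfl⟩ := exists_skipBlock_eq p hi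
    obtain ⟨b, rfl⟩ := exists_skipBlock_eq p (mt (hlast _).2 hj)
    obtain ⟨c, rfl⟩ := exists_skipBlock_eq p hl
    rw [hskip, hskip] at hil ⊢
    exact Fin.castSucc_le_castSucc_iff.2 <| h a b c ((skipBlock k n p).le_iff_le.1 hij)
      ((skipBlock k n p).le_iff_le.1 hjl) (Fin.castSucc_injective _ hil)

theorem exists_forall_eq_last_iff (hk : 0 < k) {w' : Fin (k * (n + 1)) → Fin (n + 1)}
    (hw' : IsKStirling k (n + 1) w') :
    ∃ p : Fin (k * n + 1), ∀ j, w' j = Fin.last n ↔ (p : ℕ) ≤ j ∧ (j : ℕ) < p + k := by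
  set S : Finset (Fin (k * (n + 1))) := {j | w' j = Fin.last n}
  have hS : S.Nonempty := card_pos.1 ((hw'.1 (Fin.last n)).symm ▸ hk)
  have hIcc : S = Icc (S.min' hS) (S.max' hS) := by
    ext j
    refine ⟨fun hj => mem_Icc.2 ⟨S.min'_le j hj, S.le_max' j hj⟩, fun hj => ?_⟩
    obtain ⟨h₁, h₂⟩ := mem_Icc.1 hj
    have hmin := (mem_filter.1 (S.min'_mem hS)).2
    have hmax := (mem_filter.1 (S.max'_mem hS)).2
    exact mem_filter.2 ⟨mem_univ _, le_antisymm (Fin.le_last _)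
      (hmin ▸ hw'.2 _ j _ h₁ h₂ (hmin.trans hmax.symm))⟩
  have hcard : (S.max' hS : ℕ) + 1 - S.min' hS = k := by
    rw [← Fin.card_Icc, ← hIcc]
    exact hw'.1 (Fin.last n)
  have := (S.max' hS).isLt
  have := mul_add_one k n
  refine ⟨⟨S.min' hS, by omega⟩, fun j => ?_⟩
  have hj : w' j = Fin.last n ↔ S.min' hS ≤ j ∧ j ≤ S.max' hS := by
    rw [← mem_Icc, ← hIcc]
    simp [S]
  simp only [hj, Fin.le_def]
  omega

theorem injective2_insertMax (hk : 0 < k) : Function.Injective2 (insertMax k n) := by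
  intro p p' w w' h
  have hp : p = p' := by
    have := mul_add_one k n
    have hlast := fun q (v : Fin (k * n) → Fin n) (j : ℕ) (hj : j < k * (n + 1)) =>
      insertMax_eq_last_iff q v ⟨j, hj⟩
    have h₁ := (hlast p' w' p (by omega)).1 (h ▸ (hlast p w p (by omega)).2 (by simp [hk]))
    have h₂ := (hlast p w p' (by omega)).1 (h ▸ (hlast p' w' p' (by omega)).2 (by simp [hk]))
    exact Fin.ext (le_antisymm h₂.1 h₁.1)
  subst hp
  refine ⟨rfl, funext fun i => Fin.castSucc_injective _ ?_⟩
  rw [← insertMax_skipBlock p w, ← insertMax_skipBlock p w', h]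

theorem exists_insertMax_eq (hk : 0 < k) {w' : Fin (k * (n + 1)) → Fin (n + 1)}
    (hw' : IsKStirling k (n + 1) w') : ∃ p w, insertMax k n p w = w' := by
  obtain ⟨p, hp⟩ := exists_forall_eq_last_iff hk hw'
  have hskip (i : Fin (k * n)) : w' (skipBlock k n p i) ≠ Fin.last n := by
    rw [ne_eq, hp, val_skipBlock]
    split_ifs <;> omega
  refine ⟨p, fun i => (w' (skipBlock k n p i)).castPred (hskip i), funext fun j => ?_⟩
  by_cases hj : (p : ℕ) ≤ j ∧ (j : ℕ) < p + k
  · rw [(insertMax_eq_last_iff p _ j).2 hj, (hp j).2 hj]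
  · obtain ⟨i, rfl⟩ := exists_skipBlock_eq p hj
    rw [insertMax_skipBlock, Fin.castSucc_castPred]

theorem bijective_insertMax (hk : 0 < k) :
    Function.Bijective fun z : {w // IsKStirling k n w} × Fin (k * n + 1) =>
      (⟨insertMax k n z.2 z.1, (isKStirling_insertMax_iff z.2 z.1).2 z.1.2⟩ :
        {w // IsKStirling k (n + 1) w}) := by
  refine ⟨fun z z' h => ?_, fun ⟨w', hw'⟩ => ?_⟩
  · obtain ⟨hp, hw⟩ := injective2_insertMax hk (Subtype.ext_iff.1 h)
    exact Prod.ext (Subtype.ext hw) hp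
  · obtain ⟨p, w, rfl⟩ := exists_insertMax_eq hk hw'
    exact ⟨(⟨w, (isKStirling_insertMax_iff p w).1 hw'⟩, p), rfl⟩

theorem apStat_insertMax (hk : 0 < k) (p : Fin (k * n + 1)) (w : Fin (k * n) → Fin n) :
    apStat k (n + 1) (insertMax k n p w) =
      #(apSet k (k * n + k) (insertBlock p k (n + 1) (wordOf k n w))) := by
  rw [apStat, apWord_eq_card_apSet, ← mul_add_one]
  congr 1
  refine apSet_congr hk fun i hi => ?_
  have := mul_add_one k n
  simp only [wordOf, insertMax, insertBlock, hi, dite_true]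
  split_ifs <;> simp_all <;> omega

end Insertion

section Recurrence

variable {k n : ℕ}

theorem mul_card_apSet_le (u : ℕ → ℕ) {L : ℕ} : k * #(apSet k L u) ≤ L := by
  have := card_le_card (badSet_subset_range (k := k) (L := L) (u := u))
  rw [card_badSet, card_range] at this
  omega

theorem wordOf_le (w : Fin (k * n) → Fin n) (i : ℕ) : wordOf k n w i ≤ n := by
  unfold wordOf
  split_ifs
  · exact Fin.is_lt _
  · exact n.zero_le

def apPoly (k n : ℕ) : ℝ[X] :=
  ∑ w : {w : Fin (k * n) → Fin n // IsKStirling k n w}, X ^ apStat k n w.1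

theorem apPoly_zero : apPoly k 0 = 1 := by
  have : Unique {w : Fin (k * 0) → Fin 0 // IsKStirling k 0 w} :=
    { default := ⟨Fin.elim0, fun m => m.elim0, fun i => i.elim0⟩
      uniq := fun w => Subtype.ext (funext fun i => i.elim0) }
  simp [apPoly, apStat, apWord_eq_card_apSet, apSet]

theorem nsmul_X_pow_add_nsmul_X_pow_succ {d : ℕ} (hd : k * d ≤ k * n) :
    (1 + k * d) • (X : ℝ[X]) ^ d + (k * n - k * d) • X ^ (d + 1) = eulerianStep k n (X ^ d) := by
  rw [eulerianStep_apply, nsmul_eq_mul, nsmul_eq_mul, Nat.cast_sub hd, derivative_X_pow]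
  cases d with
  | zero => simp
  | succ d =>
    rw [map_natCast]
    push_cast
    ring

theorem apPoly_succ (hk : 0 < k) : apPoly k (n + 1) = eulerianStep k n (apPoly k n) := by
  rw [apPoly, ← (bijective_insertMax hk).sum_comp, Fintype.sum_prod_type, apPoly, map_sum]
  refine sum_congr rfl fun w _ => ?_
  simp only [apStat_insertMax hk]
  rw [Fin.sum_univ_eq_sum_range (fun p => (X : ℝ[X]) ^ #(apSet _ _ (insertBlock p _ _ _))),
    sum_X_pow_card_apSet_insertBlock hk fun i _ => wordOf_le w.1 i]
  exact nsmul_X_pow_add_nsmul_X_pow_succ (mul_card_apSet_le _)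

end Recurrence

open PowerSeries (egf derivative_egf X_mul_egf X_mul_derivative_egf C_mul_egf egf_add
  egf_injective) in
theorem succ_eq_eulerianStep_of_EGFcond {k : ℕ} (hk : k ≠ 0) {A : ℕ → ℝ[X]} (hA0 : A 0 = 1)
    (hA : EGFcond k A) (n : ℕ) : A (n + 1) = eulerianStep k n (A n) := by
  set p : ℝ[X] := C (k : ℝ) * (X - 1)
  set c : ℝ[X]⟦X⟧ := PowerSeries.C X
  have hkC : (k : ℝ[X]⟦X⟧) = PowerSeries.C (C (k : ℝ)) := by simp
  have h : egf A ^ k * (egf (p ^ ·) - c) = 1 - c := by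
    rw [← map_one PowerSeries.C, ← map_sub]
    exact hA
  have hEz : d⁄dX ℝ[X] (egf (p ^ ·)) = k * (c - 1) * egf (p ^ ·) := by
    rw [derivative_egf, hkC, ← map_one PowerSeries.C, ← map_sub, ← map_mul, C_mul_egf]
    simp [p, pow_succ']
  have hEx : derivative'.mapPowerSeries (egf (p ^ ·)) =
      (k : ℝ[X]⟦X⟧) * PowerSeries.X * egf (p ^ ·) := by
    rw [Derivation.mapPowerSeries_egf, mul_assoc, X_mul_egf, hkC, C_mul_egf]
    congr 1
    funext m
    simp [p]
    ring
  have hne : (k : ℝ[X]⟦X⟧) * egf A ^ (k - 1) * (egf (p ^ ·) - c) ≠ 0 := by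
    refine ne_of_apply_ne PowerSeries.constantCoeff ?_
    simpa [c, hA0, hk, sub_eq_zero, p] using (X_ne_C (1 : ℝ)).symm
  have key := Derivation.pde_of_pow_mul_sub_eq (d⁄dX ℝ[X]) derivative'.mapPowerSeries h hEz
    (PowerSeries.derivative_C) hEx (by simp [c, Derivation.mapPowerSeries_C]) hne
  have hrec : (egf fun m => A (m + 1)) = egf fun m => eulerianStep k m (A m) := calc
    (egf fun m => A (m + 1)) = d⁄dX ℝ[X] (egf A) := (derivative_egf A).symm
    _ = egf A + PowerSeries.C ((k : ℝ[X]) * X) * (PowerSeries.X * d⁄dX ℝ[X] (egf A))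
          + PowerSeries.C ((k : ℝ[X]) * X * (1 - X)) * derivative'.mapPowerSeries (egf A) := by
      conv_lhs => rw [key]
      simp only [c, map_mul, map_sub, map_one, map_natCast]
      ring
    _ = egf fun m => eulerianStep k m (A m) := by
      rw [X_mul_derivative_egf, Derivation.mapPowerSeries_egf, C_mul_egf, C_mul_egf, ← egf_add,
        ← egf_add]
      congr 1
      funext m
      simp
      ring
  simpa using congrFun (egf_injective hrec) n

end KStirling

/-- For every `n, k ≥ 1` the `1/k`-Eulerian polynomial (defined by the EGF
`Σ A_n^{(k)}(x) z^n/n! = ((1-x)/(e^{kz(x-1)}-x))^{1/k}`) satisfies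
`A_n^{(k)}(x) = Σ_{π ∈ Q_n(k)} x^{ap(π)}`. -/
theorem one_over_k_Eulerian_ascent_plateau (k : ℕ) (hk : 1 ≤ k)
    (A : ℕ → Polynomial ℝ) (hA0 : A 0 = 1) (hA : EGFcond k A) :
    ∀ n : ℕ, 1 ≤ n →
      A n = ∑ w : {w : Fin (k * n) → Fin n // IsKStirling k n w}, X ^ apStat k n w.1 := by
  have hA_eq : ∀ n, A n = KStirling.apPoly k n := by
    intro n
    induction n with
    | zero => rw [hA0, KStirling.apPoly_zero]
    | succ n ih =>
      rw [KStirling.succ_eq_eulerianStep_of_EGFcond (by omega) hA0 hA, ih, KStirling.apPoly_succ hk]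
  exact fun n _ => hA_eq n

end
end

section
/- The number of k-Stirling permutations of order n equals the number of increasing pruned even k-ary forests on {1,...,n}; moreover there is a bijection ξ between them such that lap(π) = lleaf(ξ(π)), the number of labeled leaves of the image forest. -/
open Polynomial
open scoped Classical

noncomputable section

/-!  Increasing pruned even `k`-ary forests on a linearly ordered label set `α` are
encoded by parent functions `f : α → Option (α × Fin k)`: `f x = some (y, s)` means the
labeled node `x` is attached to the `s`-th (unlabeled) child of the labeled node `y`,
and `f x = none` means `x` is the root of a component.  The increasing condition says
that labels of the children of each node increase, so the ordered-tree structure is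
determined by `f`; components are ordered by their (increasing) root labels.  -/

/-- The labeled node `u` has a labeled grand child (so it is an internal labeled node
carrying its `k` unlabeled children in the pruned tree). -/
def hasChild {α : Type} {k : ℕ} (f : α → Option (α × Fin k)) (u : α) : Prop :=
  ∃ x s, f x = some (u, s)

/-- `f` encodes an increasing pruned even `k`-ary forest: parents carry smaller labels. -/
def IsForest {α : Type} [LT α] {k : ℕ} (f : α → Option (α × Fin k)) : Prop :=
  ∀ x y s, f x = some (y, s) → y < x

/-- `f` encodes an increasing pruned even `k`-ary tree: a forest with a unique root. -/
def IsTree {α : Type} [LT α] {k : ℕ} (f : α → Option (α × Fin k)) : Prop :=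
  IsForest f ∧ ∃! r, f r = none

/-- `lleaf`: the number of labeled leaves. -/
noncomputable def lleafStat {α : Type} [Fintype α] {k : ℕ}
    (f : α → Option (α × Fin k)) : ℕ :=
  (Finset.univ.filter fun u => ¬ hasChild f u).card

/-- `si`: the number of singleton components (roots that are leaves). -/
noncomputable def siStat {α : Type} [Fintype α] {k : ℕ}
    (f : α → Option (α × Fin k)) : ℕ :=
  (Finset.univ.filter fun u => f u = none ∧ ¬ hasChild f u).card

/-- A non-root labeled node is old if it carries the greatest label among all the
grand children of its grand parent. -/
def oldNode {α : Type} [LinearOrder α] {k : ℕ}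
    (f : α → Option (α × Fin k)) (v : α) : Prop :=
  ∃ y s, f v = some (y, s) ∧ ∀ x : α, (∃ t, f x = some (y, t)) → x ≤ v

/-- A non-root labeled node that is not old is young. -/
def youngNode {α : Type} [LinearOrder α] {k : ℕ}
    (f : α → Option (α × Fin k)) (v : α) : Prop :=
  (∃ y s, f v = some (y, s)) ∧ ¬ oldNode f v

/-- `oleaf`: the number of old labeled leaves. -/
noncomputable def oleafStat {α : Type} [LinearOrder α] [Fintype α] {k : ℕ}
    (f : α → Option (α × Fin k)) : ℕ :=
  (Finset.univ.filter fun v => oldNode f v ∧ ¬ hasChild f v).card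

/-- `oint`: the number of old internal labeled nodes. -/
noncomputable def ointStat {α : Type} [LinearOrder α] [Fintype α] {k : ℕ}
    (f : α → Option (α × Fin k)) : ℕ :=
  (Finset.univ.filter fun v => oldNode f v ∧ hasChild f v).card

/-- `F` has no young leaves. -/
def NoYoungLeaf {α : Type} [LinearOrder α] {k : ℕ}
    (f : α → Option (α × Fin k)) : Prop :=
  ∀ v : α, ¬ (youngNode f v ∧ ¬ hasChild f v)

/-- The generalized Foata–Strehl transformation `Φ_v`.  If `v` is an old internal node
with grand parent `u`, the subtrees hanging from the `k` children of `v` are transferred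
(slotwise) to the corresponding children of `u`, turning `v` into a leaf; if `v` is a
young leaf, all subtrees hanging from the children of `u` whose root labels exceed `v`
are transferred (slotwise) to `k` freshly attached children of `v`; otherwise nothing
happens. -/
noncomputable def phi {α : Type} [LinearOrder α] {k : ℕ} (v : α)
    (f : α → Option (α × Fin k)) : α → Option (α × Fin k) :=
  match f v with
  | none => f
  | some (u, _) =>
    if ∀ x : α, (∃ t, f x = some (u, t)) → x ≤ v then
      -- `v` is old
      if hasChild f v then
        (fun x => match f x with
          | some (w, j) => if w = v then some (u, j) else some (w, j)
          | none => none)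
      else f
    else
      -- `v` is young
      if hasChild f v then f
      else
        (fun x => match f x with
          | some (w, j) => if w = u ∧ v < x then some (v, j) else some (w, j)
          | none => none)

/-- `u` is a removable old leaf of the forest `f`: an old leaf that is a grand child of
the root `r` of its component, the only leaf among the grand children of `r`, the first
`k-1` children of `r` are leaves, and the label of `u` is smaller than the label of
every later root. -/
def removableOldLeaf {α : Type} [LinearOrder α] {k : ℕ}
    (f : α → Option (α × Fin k)) (u : α) : Prop :=
  oldNode f u ∧ ¬ hasChild f u ∧
  ∃ (r : α) (s : Fin k), f u = some (r, s) ∧ f r = none ∧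
    (∀ x : α, (∃ t, f x = some (r, t)) → x ≠ u → hasChild f x) ∧
    (∀ (x : α) (j : Fin k), (j : ℕ) < k - 1 → f x ≠ some (r, j)) ∧
    (∀ r' : α, f r' = none → r < r' → u < r')

/-- `u` is a removable young leaf of the forest `f`: a young leaf that is a grand child
of the root `r` of the rightmost component such that after applying `Φ_u` the first
`k-1` children of `r` are leaves. -/
noncomputable def removableYoungLeaf {α : Type} [LinearOrder α] {k : ℕ}
    (f : α → Option (α × Fin k)) (u : α) : Prop :=
  youngNode f u ∧ ¬ hasChild f u ∧
  ∃ (r : α) (s : Fin k), f u = some (r, s) ∧ f r = none ∧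
    (∀ r' : α, f r' = none → r' ≤ r) ∧
    (∀ (x : α) (j : Fin k), (j : ℕ) < k - 1 → phi u f x ≠ some (r, j))

/-- The forest lies in the class `\overline{𝓕}_n(k)`: the rightmost tree is a singleton
or the first `k-1` children of its root are leaves. -/
def inBarClass {α : Type} [LinearOrder α] {k : ℕ}
    (f : α → Option (α × Fin k)) : Prop :=
  ∃ r : α, f r = none ∧ (∀ r' : α, f r' = none → r' ≤ r) ∧
    (¬ hasChild f r ∨
      ∀ (x : α) (j : Fin k), (j : ℕ) < k - 1 → f x ≠ some (r, j))

/-!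
Both families grow by adding the largest label. A `k`-Stirling permutation of order `n + 1`
arises from a unique one of order `n` by inserting the block of the `k` letters `n + 1` into
one of its `kn + 1` gaps, and an increasing pruned even `k`-ary forest on `n + 1` labels
arises from a unique one on `n` labels by attaching `n + 1` as a new root or in one of the
`kn` slots below a labeled node. The insertion raises `lap` by one unless the gap lies in the
window of length `k` of one of the `lap(π)` longest ascent-plateaux of `0π`, which happens for
`k · lap(π)` gaps; the attachment raises `lleaf` by one unless the slot lies below one of the
`lleaf(F)` leaves, which happens for `k · lleaf(F)` slots. So a bijection preserving the
statistics at order `n` extends, fibre by fibre, to order `n + 1`.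
-/

namespace StirlingForest

lemma exists_equiv_mem_iff {γ δ : Type*} [Fintype γ] [Fintype δ]
    (hcard : Fintype.card γ = Fintype.card δ) {s : Finset γ} {t : Finset δ}
    (h : s.card = t.card) : ∃ σ : γ ≃ δ, ∀ x, σ x ∈ t ↔ x ∈ s := by
  let σ₀ := Fintype.equivOfCardEq hcard
  let e : {y // y ∈ s.map σ₀.toEmbedding} ≃ {y // y ∈ t} :=
    Finset.equivOfCardEq (by rw [Finset.card_map, h])
  refine ⟨σ₀.trans e.extendSubtype, fun x => ?_⟩
  have hx : σ₀ x ∈ s.map σ₀.toEmbedding ↔ x ∈ s := by simp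
  by_cases hxs : x ∈ s
  · simpa [hxs] using e.extendSubtype_mem (σ₀ x) (hx.mpr hxs)
  · simpa [hxs] using e.extendSubtype_not_mem (σ₀ x) (mt hx.mp hxs)

section Words

variable {k L : ℕ} {v : ℕ → ℕ}

def apSet (k L : ℕ) (v : ℕ → ℕ) : Finset ℕ :=
  (Finset.range L).filter fun i =>
    i + k < L ∧ v i < v (i + 1) ∧ ∀ j < k, v (i + 1 + j) = v (i + 1)

lemma card_apSet : (apSet k L v).card = apWord k L v := rfl

lemma mem_apSet {i : ℕ} :
    i ∈ apSet k L v ↔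
      i + k < L ∧ v i < v (i + 1) ∧ ∀ j < k, v (i + 1 + j) = v (i + 1) := by
  simp only [apSet, Finset.mem_filter, Finset.mem_range, and_iff_right_iff_imp]
  omega

lemma mem_apSet_congr {L' i i' : ℕ} {v' : ℕ → ℕ} (hk : 1 ≤ k)
    (hlen : i + k < L ↔ i' + k < L')
    (hv : ∀ t ≤ k, v (i + t) = v' (i' + t)) : i ∈ apSet k L v ↔ i' ∈ apSet k L' v' := by
  have hshift : ∀ j < k, v (i + 1 + j) = v' (i' + 1 + j) := fun j hj => by
    simpa only [add_assoc] using hv (1 + j) (by omega)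
  have h0 : v i = v' i' := hv 0 (Nat.zero_le k)
  have h1 : v (i + 1) = v' (i' + 1) := by simpa using hshift 0 hk
  simp only [mem_apSet, h0, h1, hlen]
  exact and_congr_right fun _ => and_congr_right fun _ =>
    forall₂_congr fun j hj => by rw [hshift j hj]

lemma add_le_of_mem_apSet {i i' : ℕ} (hi : i ∈ apSet k L v) (hi' : i' ∈ apSet k L v)
    (h : i < i') : i + k ≤ i' := by
  obtain ⟨-, -, hplat⟩ := mem_apSet.mp hi
  obtain ⟨-, hasc, -⟩ := mem_apSet.mp hi'
  by_contra! hlt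
  have h1 := hplat (i' - i - 1) (by omega)
  have h2 := hplat (i' - i) (by omega)
  rw [show i + 1 + (i' - i - 1) = i' by omega] at h1
  rw [show i + 1 + (i' - i) = i' + 1 by omega] at h2
  omega

def apWindows (k L : ℕ) (v : ℕ → ℕ) : Finset ℕ :=
  (apSet k L v).biUnion fun i => Finset.Ico i (i + k)

lemma card_apWindows : (apWindows k L v).card = k * apWord k L v := by
  rw [apWindows, Finset.card_biUnion, Finset.sum_const_nat (m := k) fun i _ => by simp, card_apSet,
    mul_comm]
  intro i hi i' hi' hne
  simp only [Function.onFun, Finset.disjoint_left, Finset.mem_Ico]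
  rcases lt_or_gt_of_ne hne with h | h
  · have := add_le_of_mem_apSet hi hi' h; omega
  · have := add_le_of_mem_apSet hi' hi h; omega

lemma lt_of_mem_apWindows {q : ℕ} (h : q ∈ apWindows k L v) : q < L := by
  obtain ⟨i, hi, hq⟩ := Finset.mem_biUnion.mp h
  have := (mem_apSet.mp hi).1
  rw [Finset.mem_Ico] at hq
  omega

def insertBlock (k : ℕ) (v : ℕ → ℕ) (p M : ℕ) : ℕ → ℕ :=
  fun j => if j ≤ p then v j else if j ≤ p + k then M else v (j - k)

variable {p M j : ℕ}

lemma insertBlock_of_le (h : j ≤ p) : insertBlock k v p M j = v j := if_pos h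

lemma insertBlock_of_lt_of_le (h₁ : p < j) (h₂ : j ≤ p + k) : insertBlock k v p M j = M := by
  rw [insertBlock, if_neg (by omega), if_pos h₂]

lemma insertBlock_add (h : p < j) : insertBlock k v p M (j + k) = v j := by
  rw [insertBlock, if_neg (by omega), if_neg (by omega), Nat.add_sub_cancel]

lemma insertBlock_le (hvM : ∀ x, v x < M) (j : ℕ) : insertBlock k v p M j ≤ M := by
  unfold insertBlock
  split_ifs <;> first | exact (hvM _).le | exact le_rfl

lemma self_mem_apSet_insertBlock (hk : 1 ≤ k) (hvM : ∀ x, v x < M) (hp : p < L) :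
    p ∈ apSet k (L + k) (insertBlock k v p M) := by
  refine mem_apSet.mpr ⟨by omega, ?_, fun t ht => ?_⟩
  · rw [insertBlock_of_le le_rfl, insertBlock_of_lt_of_le (by omega) (by omega)]
    exact hvM p
  · rw [insertBlock_of_lt_of_le (by omega) (by omega),
      insertBlock_of_lt_of_le (by omega) (by omega)]

lemma not_mem_apSet_insertBlock (hvM : ∀ x, v x < M) (hjp : j ≠ p) (h₁ : p < j + k)
    (h₂ : j ≤ p + k) :
    j ∉ apSet k (L + k) (insertBlock k v p M) := by
  intro hj
  obtain ⟨-, hasc, hplat⟩ := mem_apSet.mp hj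
  rcases lt_or_gt_of_ne hjp with hlt | hgt
  · have hM := hplat (p - j) (by omega)
    rw [show j + 1 + (p - j) = p + 1 by omega, insertBlock_of_lt_of_le (by omega) (by omega),
      insertBlock_of_le (by omega)] at hM
    exact (hvM _).ne' hM
  · rw [insertBlock_of_lt_of_le hgt h₂] at hasc
    exact (insertBlock_le hvM _).not_gt hasc

lemma mem_apSet_insertBlock_of_add_le (hk : 1 ≤ k) (hp : p < L) (h : j + k ≤ p) :
    j ∈ apSet k (L + k) (insertBlock k v p M) ↔ j ∈ apSet k L v :=
  mem_apSet_congr hk (by omega) fun t ht => insertBlock_of_le (by omega)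

lemma add_mem_apSet_insertBlock (hk : 1 ≤ k) (h : p < j) :
    j + k ∈ apSet k (L + k) (insertBlock k v p M) ↔ j ∈ apSet k L v :=
  mem_apSet_congr hk (by omega) fun t ht => by
    rw [show j + k + t = j + t + k by omega, insertBlock_add (by omega)]

lemma apSet_insertBlock (hk : 1 ≤ k) (hvM : ∀ x, v x < M) (hp : p < L) :
    apSet k (L + k) (insertBlock k v p M) =
      insert p (((apSet k L v).filter fun i => p ∉ Finset.Ico i (i + k)).image
        fun i => if i + k ≤ p then i else i + k) := by
  ext j
  simp only [Finset.mem_insert, Finset.mem_image, Finset.mem_filter, Finset.mem_Ico]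
  constructor
  · intro hj
    by_cases hjp : j = p
    · exact Or.inl hjp
    refine Or.inr ?_
    by_cases hle : j + k ≤ p
    · exact ⟨j, ⟨(mem_apSet_insertBlock_of_add_le hk hp hle).mp hj, by omega⟩, if_pos hle⟩
    by_cases hgt : p + k < j
    · have hshift := add_mem_apSet_insertBlock (L := L) (v := v) (M := M) hk
        (show p < j - k by omega)
      rw [Nat.sub_add_cancel (by omega)] at hshift
      exact ⟨j - k, ⟨hshift.mp hj, by omega⟩, by rw [if_neg (by omega)]; omega⟩
    exact absurd hj (not_mem_apSet_insertBlock hvM hjp (by omega) (by omega))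
  · rintro (rfl | ⟨i, ⟨hi, hpi⟩, rfl⟩)
    · exact self_mem_apSet_insertBlock hk hvM hp
    split_ifs with hle
    · exact (mem_apSet_insertBlock_of_add_le hk hp hle).mpr hi
    · exact (add_mem_apSet_insertBlock hk (by omega)).mpr hi

lemma card_filter_mem_Ico_apSet (p : ℕ) :
    ((apSet k L v).filter fun i => p ∈ Finset.Ico i (i + k)).card =
      if p ∈ apWindows k L v then 1 else 0 := by
  split_ifs with hp
  · obtain ⟨i, hi, hpi⟩ := Finset.mem_biUnion.mp hp
    refine Finset.card_eq_one.mpr ⟨i, Finset.eq_singleton_iff_unique_mem.mpr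
      ⟨Finset.mem_filter.mpr ⟨hi, hpi⟩, fun i' hi' => ?_⟩⟩
    obtain ⟨hi', hpi'⟩ := Finset.mem_filter.mp hi'
    rw [Finset.mem_Ico] at hpi hpi'
    by_contra hne
    rcases lt_or_gt_of_ne hne with h | h
    · have := add_le_of_mem_apSet hi' hi h; omega
    · have := add_le_of_mem_apSet hi hi' h; omega
  · exact Finset.card_eq_zero.mpr (Finset.filter_eq_empty_iff.mpr fun i hi hpi =>
      hp (Finset.mem_biUnion.mpr ⟨i, hi, hpi⟩))

/-- Inserting a block of `k` copies of a new largest letter creates a new longest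
ascent-plateau and destroys the one (if any) whose window it splits. -/
lemma apWord_insertBlock (hk : 1 ≤ k) (hvM : ∀ x, v x < M) (hp : p < L) :
    apWord k (L + k) (insertBlock k v p M) =
      if p ∈ apWindows k L v then apWord k L v else apWord k L v + 1 := by
  have hinj : Set.InjOn (fun i => if i + k ≤ p then i else i + k)
      ((apSet k L v).filter fun i => p ∉ Finset.Ico i (i + k)) := by
    intro a ha b hb hab
    simp only [Finset.mem_coe, Finset.mem_filter, Finset.mem_Ico] at ha hb hab
    split_ifs at hab <;> omega
  have hp_notMem : p ∉ ((apSet k L v).filter fun i => p ∉ Finset.Ico i (i + k)).image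
      fun i => if i + k ≤ p then i else i + k := by
    simp only [Finset.mem_image, Finset.mem_filter, Finset.mem_Ico, not_exists, not_and]
    intro i _ hi
    split_ifs at hi <;> omega
  have hsplit := Finset.card_filter_add_card_filter_not (s := apSet k L v)
    fun i => p ∈ Finset.Ico i (i + k)
  rw [← card_apSet, apSet_insertBlock hk hvM hp, Finset.card_insert_of_notMem hp_notMem,
    Finset.card_image_of_injOn hinj, ← card_apSet]
  rw [card_filter_mem_Ico_apSet] at hsplit
  split_ifs at hsplit ⊢ <;> omega

end Words

section Stirling

variable {k n : ℕ}

abbrev StirlingPerm (k n : ℕ) := {w : Fin (k * n) → Fin n // IsKStirling k n w}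

/-- The positions of a word of length `k * (n + 1)` outside the block `[p, p + k)`. -/
def gapEmb (p : Fin (k * n + 1)) : Fin (k * n) ↪o Fin (k * (n + 1)) :=
  OrderEmbedding.ofStrictMono
    (fun a => ⟨if (a : ℕ) < p then (a : ℕ) else a + k, by
      have := a.isLt; rw [Nat.mul_succ]; split_ifs <;> omega⟩)
    fun a b hab => by
      simp only [Fin.mk_lt_mk]
      have : (a : ℕ) < b := hab
      split_ifs <;> omega

variable {p : Fin (k * n + 1)}

lemma gapEmb_val (a : Fin (k * n)) :
    (gapEmb p a : ℕ) = if (a : ℕ) < p then (a : ℕ) else a + k := rfl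

lemma mem_range_gapEmb {i : Fin (k * (n + 1))} :
    i ∈ Set.range (gapEmb p) ↔ ¬ ((p : ℕ) ≤ i ∧ (i : ℕ) < p + k) := by
  constructor
  · rintro ⟨a, rfl⟩
    rw [gapEmb_val]
    split_ifs <;> omega
  · intro hi
    have := i.isLt
    have := p.isLt
    have : k * (n + 1) = k * n + k := Nat.mul_succ k n
    by_cases hlt : (i : ℕ) < p
    · exact ⟨⟨i, by omega⟩, Fin.ext (by simp [gapEmb_val, hlt])⟩
    · refine ⟨⟨i - k, by omega⟩, Fin.ext ?_⟩
      rw [gapEmb_val, if_neg (show ¬ (i : ℕ) - k < p by omega)]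
      exact Nat.sub_add_cancel (by omega)

/-- Insert a block of `k` copies of the new largest letter `n + 1` after the first `p`
letters of `w`. -/
def insertTop (w : Fin (k * n) → Fin n) (p : Fin (k * n + 1)) :
    Fin (k * (n + 1)) → Fin (n + 1) :=
  Function.extend (gapEmb p) (Fin.castSucc ∘ w) fun _ => Fin.last n

variable {w : Fin (k * n) → Fin n}

lemma insertTop_gapEmb (a : Fin (k * n)) : insertTop w p (gapEmb p a) = (w a).castSucc :=
  (gapEmb p).injective.extend_apply _ _ a

lemma insertTop_eq_last_iff_notMem_range {i : Fin (k * (n + 1))} :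
    insertTop w p i = Fin.last n ↔ i ∉ Set.range (gapEmb p) := by
  constructor
  · rintro h ⟨a, rfl⟩
    rw [insertTop_gapEmb] at h
    exact (Fin.castSucc_lt_last _).ne h
  · exact fun h => Function.extend_apply' _ _ _ fun ⟨a, ha⟩ => h ⟨a, ha⟩

lemma exists_gapEmb_eq_of_insertTop_ne_last {i : Fin (k * (n + 1))}
    (h : insertTop w p i ≠ Fin.last n) : ∃ a, gapEmb p a = i :=
  not_not.mp (mt insertTop_eq_last_iff_notMem_range.mpr h)

lemma insertTop_eq_last_iff {i : Fin (k * (n + 1))} :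
    insertTop w p i = Fin.last n ↔ (p : ℕ) ≤ i ∧ (i : ℕ) < p + k := by
  rw [insertTop_eq_last_iff_notMem_range, mem_range_gapEmb, not_not]

lemma card_filter_insertTop_castSucc (m : Fin n) :
    (Finset.univ.filter fun i => insertTop w p i = m.castSucc).card =
      (Finset.univ.filter fun a => w a = m).card := by
  rw [← Finset.card_map (gapEmb p).toEmbedding]
  congr 1
  ext i
  simp only [Finset.mem_filter, Finset.mem_univ, true_and, Finset.mem_map]
  constructor
  · intro hi
    have hne : insertTop w p i ≠ Fin.last n := hi ▸ (Fin.castSucc_lt_last m).ne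
    obtain ⟨a, rfl⟩ := exists_gapEmb_eq_of_insertTop_ne_last hne
    rw [insertTop_gapEmb, Fin.castSucc_inj] at hi
    exact ⟨a, hi, rfl⟩
  · rintro ⟨a, rfl, rfl⟩
    exact insertTop_gapEmb a

lemma card_filter_insertTop_last :
    (Finset.univ.filter fun i => insertTop w p i = Fin.last n).card = k := by
  have : (Finset.univ.filter fun i => insertTop w p i = Fin.last n) =
      (Finset.univ.map (gapEmb p).toEmbedding)ᶜ := by
    ext i
    simp [insertTop_eq_last_iff_notMem_range]
  rw [this, Finset.card_compl, Finset.card_map, Finset.card_univ, Fintype.card_fin,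
    Fintype.card_fin, Nat.mul_succ, Nat.add_sub_cancel_left]

lemma isKStirling_insertTop_iff : IsKStirling k (n + 1) (insertTop w p) ↔ IsKStirling k n w := by
  constructor
  · rintro ⟨hcount, hnest⟩
    refine ⟨fun m => card_filter_insertTop_castSucc (p := p) m ▸ hcount m.castSucc,
      fun a b c hab hbc hac => ?_⟩
    have := hnest (gapEmb p a) (gapEmb p b) (gapEmb p c) ((gapEmb p).le_iff_le.mpr hab)
      ((gapEmb p).le_iff_le.mpr hbc) (by rw [insertTop_gapEmb, insertTop_gapEmb, hac])
    rwa [insertTop_gapEmb, insertTop_gapEmb, Fin.castSucc_le_castSucc_iff] at this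
  · rintro ⟨hcount, hnest⟩
    refine ⟨fun m => ?_, fun i j l hij hjl hil => ?_⟩
    · induction m using Fin.lastCases with
      | last => exact card_filter_insertTop_last
      | cast m => rw [card_filter_insertTop_castSucc, hcount]
    by_cases hj : insertTop w p j = Fin.last n
    · exact hj ▸ Fin.le_last _
    obtain ⟨b, rfl⟩ := exists_gapEmb_eq_of_insertTop_ne_last hj
    by_cases hi : insertTop w p i = Fin.last n
    · have hl := hil ▸ hi
      rw [insertTop_eq_last_iff] at hi hl
      exact absurd (insertTop_eq_last_iff.mpr ⟨hi.1.trans hij, lt_of_le_of_lt hjl hl.2⟩) hj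
    obtain ⟨a, rfl⟩ := exists_gapEmb_eq_of_insertTop_ne_last hi
    obtain ⟨c, rfl⟩ := exists_gapEmb_eq_of_insertTop_ne_last (hil ▸ hi)
    rw [insertTop_gapEmb, insertTop_gapEmb, Fin.castSucc_inj] at hil
    rw [insertTop_gapEmb, insertTop_gapEmb, Fin.castSucc_le_castSucc_iff]
    exact hnest a b c ((gapEmb p).le_iff_le.mp hij) ((gapEmb p).le_iff_le.mp hjl) hil

lemma eq_of_insertTop_eq (hk : 1 ≤ k) {w' : Fin (k * n) → Fin n} {p' : Fin (k * n + 1)}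
    (h : insertTop w p = insertTop w' p') : w = w' ∧ p = p' := by
  have hblock (i : Fin (k * (n + 1))) :
      (p : ℕ) ≤ i ∧ (i : ℕ) < p + k ↔ (p' : ℕ) ≤ i ∧ (i : ℕ) < p' + k := by
    rw [← insertTop_eq_last_iff (w := w), h, insertTop_eq_last_iff]
  have hm : k * (n + 1) = k * n + k := Nat.mul_succ k n
  have h₁ := hblock ⟨p, by omega⟩
  have h₂ := hblock ⟨p', by omega⟩
  simp only at h₁ h₂
  obtain rfl : p = p' := Fin.ext (by omega)
  refine ⟨funext fun a => Fin.castSucc_injective _ ?_, rfl⟩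
  rw [← insertTop_gapEmb, h, insertTop_gapEmb]

lemma exists_last_block (hk : 1 ≤ k) {u : Fin (k * (n + 1)) → Fin (n + 1)}
    (hu : IsKStirling k (n + 1) u) :
    ∃ p : Fin (k * n + 1), ∀ i, u i = Fin.last n ↔ (p : ℕ) ≤ i ∧ (i : ℕ) < p + k := by
  set S := Finset.univ.filter fun i => u i = Fin.last n
  have hS : ∀ i, i ∈ S ↔ u i = Fin.last n := by simp [S]
  have hne : S.Nonempty := Finset.card_pos.mp (by rw [hu.1]; omega)
  have hmin := (hS _).mp (S.min'_mem hne)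
  have hblock (i) : u i = Fin.last n ↔ S.min' hne ≤ i ∧ i ≤ S.max' hne := by
    refine ⟨fun hi => ⟨S.min'_le i ((hS i).mpr hi), S.le_max' i ((hS i).mpr hi)⟩,
      fun ⟨h₁, h₂⟩ => ?_⟩
    have := hu.2 _ i _ h₁ h₂ (hmin.trans ((hS _).mp (S.max'_mem hne)).symm)
    rw [hmin] at this
    exact Fin.last_le_iff.mp this
  have hcard : (S.max' hne : ℕ) + 1 = S.min' hne + k := by
    have h : S = Finset.Icc (S.min' hne) (S.max' hne) := by
      ext i
      rw [hS, hblock, Finset.mem_Icc]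
    have : S.card = k := hu.1 (Fin.last n)
    rw [h, Fin.card_Icc] at this
    have := S.min'_le _ (S.max'_mem hne)
    rw [Fin.le_def] at this
    omega
  have hm : k * (n + 1) = k * n + k := Nat.mul_succ k n
  have := (S.max' hne).isLt
  refine ⟨⟨S.min' hne, by omega⟩, fun i => ?_⟩
  rw [hblock, Fin.le_def, Fin.le_def]
  show _ ↔ (S.min' hne : ℕ) ≤ i ∧ (i : ℕ) < S.min' hne + k
  omega

lemma exists_insertTop_eq (hk : 1 ≤ k) {u : Fin (k * (n + 1)) → Fin (n + 1)}
    (hu : IsKStirling k (n + 1) u) : ∃ w p, insertTop w p = u := by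
  obtain ⟨p, hp⟩ := exists_last_block hk hu
  have hne : ∀ a, u (gapEmb p a) ≠ Fin.last n := fun a h =>
    mem_range_gapEmb.mp ⟨a, rfl⟩ ((hp _).mp h)
  refine ⟨fun a => (u (gapEmb p a)).castPred (hne a), p, funext fun i => ?_⟩
  by_cases hi : i ∈ Set.range (gapEmb p)
  · obtain ⟨a, rfl⟩ := hi
    rw [insertTop_gapEmb, Fin.castSucc_castPred]
  · rw [insertTop_eq_last_iff_notMem_range.mpr hi, eq_comm, hp]
    exact not_not.mp (mt mem_range_gapEmb.mpr hi)

def stirlingSuccEquiv (hk : 1 ≤ k) :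
    StirlingPerm k n × Fin (k * n + 1) ≃ StirlingPerm k (n + 1) :=
  Equiv.ofBijective (fun x => ⟨insertTop x.1.1 x.2, isKStirling_insertTop_iff.mpr x.1.2⟩)
    ⟨fun x y h => by
      obtain ⟨hw, hp⟩ := eq_of_insertTop_eq hk (congrArg Subtype.val h)
      exact Prod.ext (Subtype.ext hw) hp,
    fun u => by
      obtain ⟨w, p, hwp⟩ := exists_insertTop_eq hk u.2
      exact ⟨(⟨w, isKStirling_insertTop_iff.mp (hwp ▸ u.2)⟩, p), Subtype.ext hwp⟩⟩

def consZero (v : ℕ → ℕ) : ℕ → ℕ := fun i => if i = 0 then 0 else v (i - 1)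

lemma lapStat_eq_apWord (w : Fin (k * n) → Fin n) :
    lapStat k n w = apWord k (k * n + 1) (consZero (wordOf k n w)) := rfl

lemma consZero_wordOf_lt (x : ℕ) : consZero (wordOf k n w) x < n + 1 := by
  unfold consZero wordOf
  split_ifs with _ h
  · omega
  · have := (w ⟨x - 1, h⟩).isLt; omega
  · omega

lemma wordOf_insertTop (j : ℕ) :
    wordOf k (n + 1) (insertTop w p) j =
      if j < p then wordOf k n w j else if j < p + k then n + 1 else wordOf k n w (j - k) := by
  have hm : k * (n + 1) = k * n + k := Nat.mul_succ k n
  have := p.isLt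
  by_cases hj : j < k * (n + 1)
  swap
  · rw [wordOf, dif_neg hj, if_neg (by omega), if_neg (by omega), wordOf, dif_neg (by omega)]
  rw [wordOf, dif_pos hj]
  by_cases hblock : (p : ℕ) ≤ j ∧ j < p + k
  · rw [insertTop_eq_last_iff.mpr hblock, Fin.val_last, if_neg (by omega), if_pos hblock.2]
  obtain ⟨a, ha⟩ := mem_range_gapEmb (i := ⟨j, hj⟩) |>.mpr hblock
  have hav := congrArg Fin.val ha
  rw [← ha, insertTop_gapEmb, Fin.val_castSucc]
  rw [gapEmb_val] at hav
  split_ifs at hav with hap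
  · subst hav
    rw [if_pos hap, wordOf, dif_pos a.isLt]
  · subst hav
    rw [if_neg (by omega), if_neg (by omega), Nat.add_sub_cancel, wordOf, dif_pos a.isLt]

lemma consZero_wordOf_insertTop :
    consZero (wordOf k (n + 1) (insertTop w p)) =
      insertBlock k (consZero (wordOf k n w)) p (n + 1) := by
  funext j
  simp only [consZero, insertBlock, wordOf_insertTop]
  split_ifs <;> first | rfl | omega | (congr 1; omega)

def lapGaps (w : Fin (k * n) → Fin n) : Finset (Fin (k * n + 1)) :=
  (apWindows k (k * n + 1) (consZero (wordOf k n w))).attachFin fun _ => lt_of_mem_apWindows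

lemma card_lapGaps : (lapGaps w).card = k * lapStat k n w := by
  rw [lapGaps, Finset.card_attachFin, card_apWindows, lapStat_eq_apWord]

lemma lapStat_insertTop (hk : 1 ≤ k) :
    lapStat k (n + 1) (insertTop w p) =
      if p ∈ lapGaps w then lapStat k n w else lapStat k n w + 1 := by
  rw [lapStat_eq_apWord, consZero_wordOf_insertTop,
    show k * (n + 1) + 1 = k * n + 1 + k by rw [Nat.mul_succ]; omega,
    apWord_insertBlock hk consZero_wordOf_lt p.isLt]
  simp only [lapGaps, Finset.mem_attachFin, lapStat_eq_apWord]

lemma lapStat_stirlingSuccEquiv (hk : 1 ≤ k) (w : StirlingPerm k n)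
    (p : Fin (k * n + 1)) :
    lapStat k (n + 1) (stirlingSuccEquiv hk (w, p)).1 =
      if p ∈ lapGaps w.1 then lapStat k n w.1 else lapStat k n w.1 + 1 :=
  lapStat_insertTop hk

end Stirling
section Forest

variable {k n : ℕ}

abbrev PrunedForest (k n : ℕ) := {f : Fin n → Option (Fin n × Fin k) // IsForest f}

def liftNode : Option (Fin n × Fin k) → Option (Fin (n + 1) × Fin k) :=
  Option.map (Prod.map Fin.castSucc id)

lemma liftNode_injective : Function.Injective (liftNode (n := n) (k := k)) :=
  Option.map_injective ((Fin.castSucc_injective n).prodMap Function.injective_id)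

lemma liftNode_eq_some_iff {o : Option (Fin n × Fin k)} {y : Fin (n + 1)} {s : Fin k} :
    liftNode o = some (y, s) ↔ ∃ y₀, o = some (y₀, s) ∧ y₀.castSucc = y := by
  simp [liftNode, Option.map_eq_some_iff, Prod.ext_iff]

lemma liftNode_eq_some_castSucc_iff {o : Option (Fin n × Fin k)} {y : Fin n} {s : Fin k} :
    liftNode o = some (y.castSucc, s) ↔ o = some (y, s) := by
  simp [liftNode_eq_some_iff]

lemma liftNode_ne_some_last (o : Option (Fin n × Fin k)) (s : Fin k) :
    liftNode o ≠ some (Fin.last n, s) := by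
  simp [liftNode_eq_some_iff]

/-- Attach the new largest label `n + 1` to the forest `g`: as a new root if `c = none`,
and below the `s`-th child of `y` if `c = some (y, s)`. -/
def attachLast (g : Fin n → Option (Fin n × Fin k)) (c : Option (Fin n × Fin k)) :
    Fin (n + 1) → Option (Fin (n + 1) × Fin k) :=
  Fin.snoc (α := fun _ => Option (Fin (n + 1) × Fin k)) (fun x => liftNode (g x)) (liftNode c)

variable {g : Fin n → Option (Fin n × Fin k)} {c : Option (Fin n × Fin k)}

@[simp]
lemma attachLast_castSucc (x : Fin n) : attachLast g c x.castSucc = liftNode (g x) :=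
  Fin.snoc_castSucc ..

@[simp]
lemma attachLast_last : attachLast g c (Fin.last n) = liftNode c :=
  Fin.snoc_last ..

lemma isForest_attachLast_iff : IsForest (attachLast g c) ↔ IsForest g := by
  constructor
  · intro hf x y s hx
    have := hf x.castSucc y.castSucc s
      (by rw [attachLast_castSucc, liftNode_eq_some_castSucc_iff, hx])
    exact Fin.castSucc_lt_castSucc_iff.mp this
  · intro hg x y s hx
    induction x using Fin.lastCases with
    | last =>
      obtain ⟨y₀, -, rfl⟩ := liftNode_eq_some_iff.mp (attachLast_last (g := g) ▸ hx)
      exact Fin.castSucc_lt_last y₀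
    | cast x =>
      obtain ⟨y₀, hy₀, rfl⟩ :=
        liftNode_eq_some_iff.mp (attachLast_castSucc (c := c) x ▸ hx)
      exact Fin.castSucc_lt_castSucc_iff.mpr (hg x y₀ s hy₀)

lemma exists_attachLast_eq {f : Fin (n + 1) → Option (Fin (n + 1) × Fin k)} (hf : IsForest f) :
    ∃ g c, attachLast g c = f := by
  have hlift : ∀ x, ∃ o, liftNode o = f x := fun x => by
    rcases hfx : f x with _ | ⟨y, s⟩
    · exact ⟨none, rfl⟩
    · have hy : y ≠ Fin.last n := ((hf x y s hfx).trans_le (Fin.le_last x)).ne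
      exact ⟨some (y.castPred hy, s), by simp [liftNode]⟩
  choose o ho using hlift
  refine ⟨fun x => o x.castSucc, o (Fin.last n), funext fun x => ?_⟩
  induction x using Fin.lastCases <;> simp [ho]

lemma eq_of_attachLast_eq {g' : Fin n → Option (Fin n × Fin k)} {c' : Option (Fin n × Fin k)}
    (h : attachLast g c = attachLast g' c') : g = g' ∧ c = c' := by
  refine ⟨funext fun x => liftNode_injective ?_, liftNode_injective ?_⟩
  · simpa using congrFun h x.castSucc
  · simpa using congrFun h (Fin.last n)

def forestSuccEquiv :
    PrunedForest k n × Option (Fin n × Fin k) ≃ PrunedForest k (n + 1) :=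
  Equiv.ofBijective (fun x => ⟨attachLast x.1.1 x.2, isForest_attachLast_iff.mpr x.1.2⟩)
    ⟨fun x y h => by
      obtain ⟨hg, hc⟩ := eq_of_attachLast_eq (congrArg Subtype.val h)
      exact Prod.ext (Subtype.ext hg) hc,
    fun f => by
      obtain ⟨g, c, hgc⟩ := exists_attachLast_eq f.2
      exact ⟨(⟨g, isForest_attachLast_iff.mp (hgc ▸ f.2)⟩, c), Subtype.ext hgc⟩⟩

lemma not_hasChild_attachLast_last : ¬ hasChild (attachLast g c) (Fin.last n) := by
  rintro ⟨x, s, hx⟩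
  induction x using Fin.lastCases with
  | last => exact liftNode_ne_some_last c s (by simpa using hx)
  | cast x => exact liftNode_ne_some_last (g x) s (by simpa using hx)

lemma hasChild_attachLast_castSucc (u : Fin n) :
    hasChild (attachLast g c) u.castSucc ↔ hasChild g u ∨ ∃ s, c = some (u, s) := by
  simp only [hasChild, Fin.exists_fin_succ', attachLast_castSucc, attachLast_last,
    liftNode_eq_some_castSucc_iff]

def leafSlots (g : Fin n → Option (Fin n × Fin k)) : Finset (Option (Fin n × Fin k)) :=
  ((Finset.univ.filter fun y => ¬ hasChild g y) ×ˢ Finset.univ).map Function.Embedding.some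

lemma card_leafSlots : (leafSlots g).card = k * lleafStat g := by
  rw [leafSlots, Finset.card_map, Finset.card_product, Finset.card_univ, Fintype.card_fin,
    lleafStat, mul_comm]

lemma some_mem_leafSlots {y : Fin n} {s : Fin k} :
    some (y, s) ∈ leafSlots g ↔ ¬ hasChild g y := by
  simp [leafSlots]

lemma none_notMem_leafSlots : none ∉ leafSlots g := by
  simp [leafSlots]

lemma lleafStat_attachLast :
    lleafStat (attachLast g c) = if c ∈ leafSlots g then lleafStat g else lleafStat g + 1 := by
  have hsplit : lleafStat (attachLast g c) =
      (Finset.univ.filter fun u => ¬ hasChild g u ∧ ∀ s, c ≠ some (u, s)).card + 1 := by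
    rw [lleafStat, Finset.card_filter, Fin.sum_univ_castSucc, Finset.card_filter]
    simp [hasChild_attachLast_castSucc, not_hasChild_attachLast_last]
  rcases c with _ | ⟨y, s⟩
  · rw [hsplit, if_neg none_notMem_leafSlots, lleafStat]
    simp
  · have herase :
        (Finset.univ.filter fun u => ¬ hasChild g u ∧ ∀ s', some (y, s) ≠ some (u, s')) =
        (Finset.univ.filter fun u => ¬ hasChild g u).erase y := by
      ext u
      simp [and_comm, eq_comm]
    rw [hsplit, herase]
    by_cases hy : hasChild g y
    · rw [if_neg (mt some_mem_leafSlots.mp (not_not.mpr hy)), lleafStat,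
        Finset.erase_eq_of_notMem (by simpa using hy)]
    · have hmem : y ∈ Finset.univ.filter fun u => ¬ hasChild g u := by simpa using hy
      rw [if_pos (some_mem_leafSlots.mpr hy), lleafStat, Finset.card_erase_add_one hmem]

lemma lleafStat_forestSuccEquiv (g : PrunedForest k n) (c : Option (Fin n × Fin k)) :
    lleafStat (forestSuccEquiv (g, c)).1 =
      if c ∈ leafSlots g.1 then lleafStat g.1 else lleafStat g.1 + 1 :=
  lleafStat_attachLast

end Forest

theorem exists_equiv_lapStat_eq_lleafStat {k : ℕ} (hk : 1 ≤ k) :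
    ∀ n, ∃ e : StirlingPerm k n ≃ PrunedForest k n, ∀ w, lapStat k n w.1 = lleafStat (e w).1
  | 0 => by
    have : IsEmpty (Fin (k * 0)) := by rw [Nat.mul_zero]; infer_instance
    refine ⟨⟨fun _ => ⟨isEmptyElim, isEmptyElim⟩,
      fun _ => ⟨isEmptyElim, isEmptyElim, isEmptyElim⟩,
      fun _ => Subsingleton.elim _ _, fun _ => Subsingleton.elim _ _⟩, fun w => ?_⟩
    have hlap : apSet k (k * 0 + 1) (consZero (wordOf k 0 w.1)) = ∅ :=
      Finset.eq_empty_of_forall_notMem fun i hi => by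
        have := (mem_apSet.mp hi).1
        omega
    rw [lapStat_eq_apWord, ← card_apSet, hlap]
    simp [lleafStat]
  | n + 1 => by
    obtain ⟨e, he⟩ := exists_equiv_lapStat_eq_lleafStat hk n
    have hmatch : ∀ w : StirlingPerm k n, ∃ σ : Fin (k * n + 1) ≃ Option (Fin n × Fin k),
        ∀ p, σ p ∈ leafSlots (e w).1 ↔ p ∈ lapGaps w.1 := fun w =>
      exists_equiv_mem_iff (by simp [Nat.mul_comm]) (by rw [card_lapGaps, card_leafSlots, he])
    choose σ hσ using hmatch
    refine ⟨(stirlingSuccEquiv hk).symm.trans ((Equiv.prodShear e σ).trans forestSuccEquiv),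
      fun u => ?_⟩
    obtain ⟨⟨w, p⟩, rfl⟩ := (stirlingSuccEquiv hk).surjective u
    simp only [Equiv.trans_apply, Equiv.symm_apply_apply, Equiv.prodShear_apply]
    rw [lapStat_stirlingSuccEquiv, lleafStat_forestSuccEquiv]
    simp only [hσ, he]

end StirlingForest

theorem stirling_forest_bijection_general (n k : ℕ) (hk : 1 ≤ k) :
    Nat.card {w : Fin (k * n) → Fin n // IsKStirling k n w} =
      Nat.card {f : Fin n → Option (Fin n × Fin k) // IsForest f} ∧
    ∃ e : {w : Fin (k * n) → Fin n // IsKStirling k n w} ≃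
        {f : Fin n → Option (Fin n × Fin k) // IsForest f},
      ∀ w, lapStat k n w.1 = lleafStat (e w).1 := by
  obtain ⟨e, he⟩ := StirlingForest.exists_equiv_lapStat_eq_lleafStat hk n
  exact ⟨Nat.card_congr e, e, he⟩

/-- The number of `k`-Stirling permutations of order `n` equals the number of increasing
pruned even `k`-ary forests on `{1,…,n}`; moreover there is a bijection `ξ` between them
with `lap(π) = lleaf(ξ(π))`. -/
theorem stirling_forest_bijection (n k : ℕ) (hn : 1 ≤ n) (hk : 1 ≤ k) :
    Nat.card {w : Fin (k * n) → Fin n // IsKStirling k n w} =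
      Nat.card {f : Fin n → Option (Fin n × Fin k) // IsForest f} ∧
    ∃ e : {w : Fin (k * n) → Fin n // IsKStirling k n w} ≃
        {f : Fin n → Option (Fin n × Fin k) // IsForest f},
      ∀ w, lapStat k n w.1 = lleafStat (e w).1 :=
  stirling_forest_bijection_general n k hk

end
end

section
/- For each label x, the generalized Foata–Strehl transformation Φ_x on increasing pruned even k-ary trees is an involution: Φ_x(Φ_x(T)) = T for every such tree T, and it maps the class of increasing pruned even k-ary trees on a set M to itself. -/
open scoped Classical

noncomputable section

/-!
On an old internal node `v` with grand parent `u`, `Φ_v` re-hangs the subtrees below `v` at the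
same slots below `u`. Afterwards `v` is a leaf, and a young one, because the re-hung roots lie
above `v`; while, `v` having been old, every other grand child of `u` lies below `v`. So the
second `Φ_v` moves exactly the re-hung subtrees back. The young-leaf case is the mirror image.
Both moves keep parents below their children and do not change the set of roots.
-/

section Graft

variable {α : Type} [LinearOrder α] {k : ℕ}

def graftUp (v u : α) (f : α → Option (α × Fin k)) : α → Option (α × Fin k) :=
  fun x => (f x).map fun p => if p.1 = v then (u, p.2) else p

def graftDown (v u : α) (f : α → Option (α × Fin k)) : α → Option (α × Fin k) :=
  fun x => (f x).map fun p => if p.1 = u ∧ v < x then (v, p.2) else p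

variable {v u x : α} {s : Fin k} {f : α → Option (α × Fin k)}

lemma oldNode_iff (hv : f v = some (u, s)) :
    oldNode f v ↔ ∀ x, (∃ t, f x = some (u, t)) → x ≤ v := by
  constructor
  · rintro ⟨y, s', hv', hle⟩
    obtain rfl : y = u := by rw [hv] at hv'; cases hv'; rfl
    exact hle
  · exact fun hle => ⟨u, s, hv, hle⟩

lemma graftUp_apply_of_eq_some {w : α} {j : Fin k} (hx : f x = some (w, j)) :
    graftUp v u f x = if w = v then some (u, j) else some (w, j) := by
  simp only [graftUp, hx, Option.map_some]; split_ifs <;> rfl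

lemma graftDown_apply_of_eq_some {w : α} {j : Fin k} (hx : f x = some (w, j)) :
    graftDown v u f x = if w = u ∧ v < x then some (v, j) else some (w, j) := by
  simp only [graftDown, hx, Option.map_some]; split_ifs <;> rfl

lemma phi_of_eq_none (hv : f v = none) : phi v f = f := by
  unfold phi; rw [hv]

lemma phi_of_oldNode_of_hasChild (hv : f v = some (u, s)) (hold : oldNode f v)
    (hch : hasChild f v) : phi v f = graftUp v u f := by
  unfold phi; rw [hv]
  simp only [if_pos ((oldNode_iff hv).1 hold), if_pos hch]
  funext x
  rcases hfx : f x with _ | ⟨w, j⟩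
  · simp [graftUp, hfx]
  · exact (graftUp_apply_of_eq_some hfx).symm

lemma phi_of_oldNode_of_not_hasChild (hv : f v = some (u, s)) (hold : oldNode f v)
    (hch : ¬ hasChild f v) : phi v f = f := by
  unfold phi; rw [hv]; simp only [if_pos ((oldNode_iff hv).1 hold), if_neg hch]

lemma phi_of_not_oldNode_of_hasChild (hv : f v = some (u, s)) (hyoung : ¬ oldNode f v)
    (hch : hasChild f v) : phi v f = f := by
  unfold phi; rw [hv]; simp only [if_neg (mt (oldNode_iff hv).2 hyoung), if_pos hch]

lemma phi_of_not_oldNode_of_not_hasChild (hv : f v = some (u, s)) (hyoung : ¬ oldNode f v)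
    (hch : ¬ hasChild f v) : phi v f = graftDown v u f := by
  unfold phi; rw [hv]; simp only [if_neg (mt (oldNode_iff hv).2 hyoung), if_neg hch]
  funext x
  rcases hfx : f x with _ | ⟨w, j⟩
  · simp [graftDown, hfx]
  · exact (graftDown_apply_of_eq_some hfx).symm

@[simp]
lemma graftUp_eq_none_iff : graftUp v u f x = none ↔ f x = none := Option.map_eq_none_iff

@[simp]
lemma graftDown_eq_none_iff : graftDown v u f x = none ↔ f x = none := Option.map_eq_none_iff

lemma IsForest.graftUp (hf : IsForest f) (huv : u < v) : IsForest (graftUp v u f) := by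
  intro x y j hx
  rcases hfx : f x with _ | ⟨w, j'⟩
  · simp [_root_.graftUp, hfx] at hx
  rw [graftUp_apply_of_eq_some hfx] at hx
  split_ifs at hx with hw <;> cases hx
  · exact huv.trans (hw ▸ hf x _ _ hfx)
  · exact hf x _ _ hfx

lemma IsForest.graftDown (hf : IsForest f) : IsForest (graftDown v u f) := by
  intro x y j hx
  rcases hfx : f x with _ | ⟨w, j'⟩
  · simp [_root_.graftDown, hfx] at hx
  rw [graftDown_apply_of_eq_some hfx] at hx
  split_ifs at hx with hw <;> cases hx
  · exact hw.2
  · exact hf x _ _ hfx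

lemma IsTree.of_isForest {g : α → Option (α × Fin k)} (hf : IsTree f) (hg : IsForest g)
    (hroots : ∀ x, g x = none ↔ f x = none) : IsTree g :=
  ⟨hg, by simpa only [hroots] using hf.2⟩

lemma IsTree.graftUp (hf : IsTree f) (huv : u < v) : IsTree (graftUp v u f) :=
  hf.of_isForest (hf.1.graftUp huv) fun _ => graftUp_eq_none_iff

lemma IsTree.graftDown (hf : IsTree f) : IsTree (graftDown v u f) :=
  hf.of_isForest hf.1.graftDown fun _ => graftDown_eq_none_iff

lemma graftUp_apply_self (hv : f v = some (u, s)) (huv : u ≠ v) :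
    graftUp v u f v = some (u, s) := by
  rw [graftUp_apply_of_eq_some hv, if_neg huv]

lemma graftDown_apply_self (hv : f v = some (u, s)) : graftDown v u f v = some (u, s) := by
  rw [graftDown_apply_of_eq_some hv, if_neg fun h => lt_irrefl v h.2]

lemma not_hasChild_graftUp (huv : u ≠ v) : ¬ hasChild (graftUp v u f) v := by
  rintro ⟨x, t, hx⟩
  rcases hfx : f x with _ | ⟨w, j⟩
  · simp [graftUp, hfx] at hx
  rw [graftUp_apply_of_eq_some hfx] at hx
  split_ifs at hx with hw <;> cases hx
  exacts [huv rfl, hw rfl]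

lemma hasChild_graftDown (hv : f v = some (u, s)) (hyoung : ¬ oldNode f v) :
    hasChild (graftDown v u f) v := by
  obtain ⟨x, ⟨t, hx⟩, hvx⟩ : ∃ x, (∃ t, f x = some (u, t)) ∧ v < x := by
    simpa only [oldNode_iff hv, not_forall, not_le, exists_prop] using hyoung
  exact ⟨x, t, by rw [graftDown_apply_of_eq_some hx, if_pos ⟨rfl, hvx⟩]⟩

lemma not_oldNode_graftUp (hf : IsForest f) (hv : f v = some (u, s)) (huv : u < v)
    (hch : hasChild f v) : ¬ oldNode (graftUp v u f) v := by
  obtain ⟨x, t, hx⟩ := hch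
  rw [oldNode_iff (graftUp_apply_self hv huv.ne)]
  intro hold
  refine (hf x v t hx).not_ge (hold x ⟨t, ?_⟩)
  rw [graftUp_apply_of_eq_some hx, if_pos rfl]

lemma oldNode_graftDown (hv : f v = some (u, s)) (huv : u ≠ v) :
    oldNode (graftDown v u f) v := by
  rw [oldNode_iff (graftDown_apply_self hv)]
  rintro x ⟨t, hx⟩
  rcases hfx : f x with _ | ⟨w, j⟩
  · simp [graftDown, hfx] at hx
  rw [graftDown_apply_of_eq_some hfx] at hx
  split_ifs at hx with hc <;> cases hx
  · exact absurd rfl huv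
  · exact not_lt.1 fun hvx => hc ⟨rfl, hvx⟩

lemma graftDown_graftUp (hf : IsForest f) (hv : f v = some (u, s)) (hold : oldNode f v) :
    graftDown v u (graftUp v u f) = f := by
  funext x
  rcases hfx : f x with _ | ⟨w, j⟩
  · simpa using hfx
  have hup := graftUp_apply_of_eq_some (v := v) (u := u) hfx
  by_cases hw : w = v
  · rw [if_pos hw] at hup
    rw [graftDown_apply_of_eq_some hup, if_pos ⟨rfl, hw ▸ hf x w j hfx⟩, hw]
  · have hnot : ¬ (w = u ∧ v < x) := fun ⟨hwu, hvx⟩ =>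
      ((oldNode_iff hv).1 hold x ⟨j, hwu ▸ hfx⟩).not_gt hvx
    rw [if_neg hw] at hup
    rw [graftDown_apply_of_eq_some hup, if_neg hnot]

lemma graftUp_graftDown (hch : ¬ hasChild f v) : graftUp v u (graftDown v u f) = f := by
  funext x
  rcases hfx : f x with _ | ⟨w, j⟩
  · simpa using hfx
  have hdown := graftDown_apply_of_eq_some (v := v) (u := u) hfx
  split_ifs at hdown with hc
  · rw [graftUp_apply_of_eq_some hdown, if_pos rfl, hc.1]
  · have hwv : w ≠ v := by
      rintro rfl
      exact hch ⟨x, j, hfx⟩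
    rw [graftUp_apply_of_eq_some hdown, if_neg hwv]

end Graft

/-- The generalized Foata–Strehl transformation `Φ_x` maps the class of increasing
pruned even `k`-ary trees on `M` to itself and is an involution on it. -/
theorem phi_involution {α : Type} [LinearOrder α] (k : ℕ) (v : α)
    (f : α → Option (α × Fin k)) (hf : IsTree f) :
    IsTree (phi v f) ∧ phi v (phi v f) = f := by
  rcases hv : f v with _ | ⟨u, s⟩
  · simp only [phi_of_eq_none hv, hf, true_and]
  have huv : u < v := hf.1 v u s hv
  by_cases hold : oldNode f v <;> by_cases hch : hasChild f v
  · rw [phi_of_oldNode_of_hasChild hv hold hch]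
    refine ⟨hf.graftUp huv, ?_⟩
    rw [phi_of_not_oldNode_of_not_hasChild (graftUp_apply_self hv huv.ne)
      (not_oldNode_graftUp hf.1 hv huv hch) (not_hasChild_graftUp huv.ne),
      graftDown_graftUp hf.1 hv hold]
  · simp only [phi_of_oldNode_of_not_hasChild hv hold hch, hf, true_and]
  · simp only [phi_of_not_oldNode_of_hasChild hv hold hch, hf, true_and]
  · rw [phi_of_not_oldNode_of_not_hasChild hv hold hch]
    refine ⟨hf.graftDown, ?_⟩
    rw [phi_of_oldNode_of_hasChild (graftDown_apply_self hv) (oldNode_graftDown hv huv.ne)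
      (hasChild_graftDown hv hold), graftUp_graftDown hch]

end
end
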